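/- arXiv:0904.1361 — 5 statements merged into one kernel-verified Lean document; each statement's English description precedes it below -/
import Mathlib

section
/- Fix α₀, β₀, V, ξ > 0, integers K ≥ 0 and M ≥ 1, observed annual loss counts n₁,…,n_K ∈ ℕ and expert opinions θ₁,…,θ_M > 0. Set ν = α₀ − 1 − Mξ + Σ_{k=1}^K n_k, ω = VK + 1/β₀ and φ = ξ·Σ_{m=1}^M θ_m. Then there exists a constant c > 0 such that for every λ > 0, [λ^{α₀−1} e^{−λ/β₀}/(β₀^{α₀}Γ(α₀))] · ∏_{k=1}^K e^{−Vλ}(Vλ)^{n_k}/n_k! · ∏_{m=1}^M [θ_m^{ξ−1} e^{−θ_m ξ/λ}/((λ/ξ)^ξ Γ(ξ))] = c · λ^ν exp(−ωλ − φ/λ); that is, the posterior density of the Poisson intensity parameter in the Poisson–Gamma–Gamma model is the generalized inverse Gaussian density GIG(ω,φ,ν). -/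
/-!
Each factor of the posterior — the Gamma prior, every Poisson likelihood and every expert's
Gamma likelihood — is, as a function of `λ > 0`, a positive multiple of a generalized inverse
Gaussian kernel `λ^ν exp(-ωλ - φ/λ)`: the Poisson likelihood has `φ = 0`, the expert likelihood
has `ω = 0`. Such kernels multiply by adding their parameters, so the posterior is a positive
multiple of the kernel with the summed parameters.
-/

open MeasureTheory ProbabilityTheory Filter

/-- Modified Bessel function of the third kind:
`K_ν(z) = (1/2) ∫₀^∞ u^(ν-1) exp(-z(u+1/u)/2) du`. -/
noncomputable def besselK (ν z : ℝ) : ℝ :=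
  (1 / 2) * ∫ u in Set.Ioi (0 : ℝ), u ^ (ν - 1) * Real.exp (-(z * (u + 1 / u)) / 2)

/-- The ratio `R_ν(z) = K_{ν+1}(z) / K_ν(z)`. -/
noncomputable def besselR (ν z : ℝ) : ℝ := besselK (ν + 1) z / besselK ν z

open Finset

noncomputable def gigKernel (ν ω φ x : ℝ) : ℝ := x ^ ν * Real.exp (-(ω * x) - φ / x)

theorem gigKernel_zero (x : ℝ) : gigKernel 0 0 0 x = 1 := by
  simp [gigKernel]

theorem gigKernel_mul {x : ℝ} (hx : 0 < x) (ν ω φ ν' ω' φ' : ℝ) :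
    gigKernel ν ω φ x * gigKernel ν' ω' φ' x = gigKernel (ν + ν') (ω + ω') (φ + φ') x := by
  rw [gigKernel, gigKernel, gigKernel, Real.rpow_add hx, mul_mul_mul_comm, ← Real.exp_add]
  ring_nf

def IsGIGProportional (f : ℝ → ℝ) (ν ω φ : ℝ) : Prop :=
  ∃ c, 0 < c ∧ ∀ x, 0 < x → f x = c * gigKernel ν ω φ x

namespace IsGIGProportional

theorem one : IsGIGProportional (fun _ => 1) 0 0 0 :=
  ⟨1, one_pos, fun x _ => by rw [gigKernel_zero, one_mul]⟩

theorem mul {f g : ℝ → ℝ} {ν ω φ ν' ω' φ' : ℝ} (hf : IsGIGProportional f ν ω φ)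
    (hg : IsGIGProportional g ν' ω' φ') :
    IsGIGProportional (fun x => f x * g x) (ν + ν') (ω + ω') (φ + φ') := by
  obtain ⟨c, hc, hfc⟩ := hf
  obtain ⟨d, hd, hgd⟩ := hg
  refine ⟨c * d, mul_pos hc hd, fun x hx => ?_⟩
  dsimp only
  rw [hfc x hx, hgd x hx, ← gigKernel_mul hx]
  ring

theorem prod {ι : Type*} (s : Finset ι) {f : ι → ℝ → ℝ} {ν ω φ : ι → ℝ}
    (hf : ∀ i ∈ s, IsGIGProportional (f i) (ν i) (ω i) (φ i)) :
    IsGIGProportional (fun x => ∏ i ∈ s, f i x) (∑ i ∈ s, ν i) (∑ i ∈ s, ω i)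
      (∑ i ∈ s, φ i) := by
  classical
  induction s using Finset.induction_on with
  | empty => simpa using one
  | insert i s hi ih =>
    simp only [prod_insert hi, sum_insert hi]
    exact (hf i (mem_insert_self i s)).mul (ih fun j hj => hf j (mem_insert_of_mem hj))

end IsGIGProportional

theorem isGIGProportional_gammaPDF {α β : ℝ} (hα : 0 < α) (hβ : 0 < β) :
    IsGIGProportional (fun x => x ^ (α - 1) * Real.exp (-x / β) / (β ^ α * Real.Gamma α))
      (α - 1) (1 / β) 0 := by
  refine ⟨(β ^ α * Real.Gamma α)⁻¹,
    inv_pos.2 (mul_pos (Real.rpow_pos_of_pos hβ α) (Real.Gamma_pos_of_pos hα)), fun x _ => ?_⟩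
  rw [gigKernel, div_eq_inv_mul]
  ring_nf

theorem isGIGProportional_poissonLikelihood {V : ℝ} (hV : 0 < V) (n : ℕ) :
    IsGIGProportional (fun x => Real.exp (-(V * x)) * (V * x) ^ n / (n.factorial : ℝ))
      n V 0 := by
  refine ⟨V ^ n / n.factorial, div_pos (pow_pos hV n) (Nat.cast_pos.2 n.factorial_pos),
    fun x _ => ?_⟩
  dsimp only
  rw [gigKernel, Real.rpow_natCast, mul_pow]
  ring_nf

theorem isGIGProportional_gammaLikelihood {θ ξ : ℝ} (hθ : 0 < θ) (hξ : 0 < ξ) :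
    IsGIGProportional
      (fun x => θ ^ (ξ - 1) * Real.exp (-(θ * ξ) / x) / ((x / ξ) ^ ξ * Real.Gamma ξ))
      (-ξ) 0 (θ * ξ) := by
  refine ⟨θ ^ (ξ - 1) * ξ ^ ξ / Real.Gamma ξ,
    div_pos (mul_pos (Real.rpow_pos_of_pos hθ _) (Real.rpow_pos_of_pos hξ ξ))
      (Real.Gamma_pos_of_pos hξ), fun x hx => ?_⟩
  have hξξ : ξ ^ ξ ≠ 0 := (Real.rpow_pos_of_pos hξ ξ).ne'
  dsimp only
  rw [gigKernel, Real.rpow_neg hx.le, Real.div_rpow hx.le hξ.le]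
  field_simp
  ring_nf

theorem poisson_gamma_gamma_posterior_is_GIG_general
    (α₀ β₀ V ξ : ℝ) (hα₀ : 0 < α₀) (hβ₀ : 0 < β₀) (hV : 0 < V) (hξ : 0 < ξ)
    (K M : ℕ) (n : Fin K → ℕ) (θ : Fin M → ℝ) (hθ : ∀ m, 0 < θ m)
    (ν ω φ : ℝ)
    (hν : ν = α₀ - 1 - M * ξ + ∑ k, (n k : ℝ))
    (hω : ω = V * K + 1 / β₀)
    (hφ : φ = ξ * ∑ m, θ m) :
    ∃ c : ℝ, 0 < c ∧ ∀ lam : ℝ, 0 < lam →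
      (lam ^ (α₀ - 1) * Real.exp (-lam / β₀) / (β₀ ^ α₀ * Real.Gamma α₀)) *
        (∏ k, Real.exp (-(V * lam)) * (V * lam) ^ (n k) / ((n k).factorial : ℝ)) *
        (∏ m, θ m ^ (ξ - 1) * Real.exp (-(θ m * ξ) / lam) / ((lam / ξ) ^ ξ * Real.Gamma ξ)) =
      c * (lam ^ ν * Real.exp (-(ω * lam) - φ / lam)) := by
  have hposterior := ((isGIGProportional_gammaPDF hα₀ hβ₀).mul
    (IsGIGProportional.prod univ fun k _ => isGIGProportional_poissonLikelihood hV (n k))).mul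
    (IsGIGProportional.prod univ fun m _ => isGIGProportional_gammaLikelihood (hθ m) hξ)
  have hν' : ν = α₀ - 1 + ∑ k, (n k : ℝ) + ∑ _m : Fin M, -ξ := by
    simp only [hν, sum_const, card_univ, Fintype.card_fin, nsmul_eq_mul]; ring
  have hω' : ω = 1 / β₀ + ∑ _k : Fin K, V + ∑ _m : Fin M, (0 : ℝ) := by
    simp only [hω, sum_const, card_univ, Fintype.card_fin, nsmul_eq_mul]; ring
  have hφ' : φ = 0 + ∑ _k : Fin K, (0 : ℝ) + ∑ m, θ m * ξ := by
    rw [hφ, sum_const_zero, mul_sum]; simp only [mul_comm, zero_add]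
  rwa [hν', hω', hφ']

/-- **Poisson–Gamma–Gamma posterior, Theorem 1.**
The product of the Gamma(α₀,β₀) prior density, the Poisson(Vλ) likelihoods of the
annual counts and the Gamma(ξ, λ/ξ) likelihoods of the expert opinions is, up to a
positive normalizing constant, the GIG(ω,φ,ν) density `λ^ν exp(-ωλ - φ/λ)`. -/
theorem poisson_gamma_gamma_posterior_is_GIG
    (α₀ β₀ V ξ : ℝ) (hα₀ : 0 < α₀) (hβ₀ : 0 < β₀) (hV : 0 < V) (hξ : 0 < ξ)
    (K M : ℕ) (hM : 1 ≤ M) (n : Fin K → ℕ) (θ : Fin M → ℝ) (hθ : ∀ m, 0 < θ m)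
    (ν ω φ : ℝ)
    (hν : ν = α₀ - 1 - M * ξ + ∑ k, (n k : ℝ))
    (hω : ω = V * K + 1 / β₀)
    (hφ : φ = ξ * ∑ m, θ m) :
    ∃ c : ℝ, 0 < c ∧ ∀ lam : ℝ, 0 < lam →
      (lam ^ (α₀ - 1) * Real.exp (-lam / β₀) / (β₀ ^ α₀ * Real.Gamma α₀)) *
        (∏ k, Real.exp (-(V * lam)) * (V * lam) ^ (n k) / ((n k).factorial : ℝ)) *
        (∏ m, θ m ^ (ξ - 1) * Real.exp (-(θ m * ξ) / lam) / ((lam / ξ) ^ ξ * Real.Gamma ξ)) =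
      c * (lam ^ ν * Real.exp (-(ω * lam) - φ / lam)) :=
  poisson_gamma_gamma_posterior_is_GIG_general α₀ β₀ V ξ hα₀ hβ₀ hV hξ K M n θ hθ ν ω φ hν hω hφ
end

section
/- For all a > 0 and b > 0, the ratio R_{bν}(a√ν) = K_{bν+1}(a√ν)/K_{bν}(a√ν) satisfies R_{bν}(a√ν) ∼ 2b√ν/a as ν → ∞, i.e. lim_{ν→∞} R_{bν}(a√ν) · a/(2b√ν) = 1. -/
/-!
Integrating `d/du (u^ν e^{-z(u+1/u)/2})` over `(0, ∞)` gives the recurrence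
`z K_{ν+1}(z) = 2ν K_ν(z) + z K_{ν-1}(z)`, i.e. `R_ν(z) = 2ν/z + 1/R_{ν-1}(z)`. As every `K_ν(z)`
is positive, this yields `2ν/z ≤ R_ν(z) ≤ 2ν/z + z/(2(ν-1))`, so `R_ν(z) ∼ 2ν/z` whenever
`z = o(ν)`, which covers `ν ↦ bν`, `z = a√ν`.
-/

open MeasureTheory ProbabilityTheory Filter

open Set Real Topology

noncomputable def besselKernel (c z u : ℝ) : ℝ := u ^ c * exp (-(z * (u + 1 / u)) / 2)

lemma besselK_eq_integral_besselKernel (ν z : ℝ) :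
    besselK ν z = 1 / 2 * ∫ u in Ioi 0, besselKernel (ν - 1) z u := rfl

section Kernel

variable {c z u : ℝ}

lemma besselKernel_pos (hu : 0 < u) : 0 < besselKernel c z u := by
  unfold besselKernel; positivity

lemma continuousOn_besselKernel : ContinuousOn (besselKernel c z) (Ioi 0) := fun u hu =>
  have hu0 : u ≠ 0 := ne_of_gt hu
  ((continuousAt_id.rpow_const (Or.inl hu0)).mul
    (by fun_prop (disch := assumption))).continuousWithinAt

lemma besselKernel_le_of_le_one (hz : 0 < z) (hu : 0 < u) (hu1 : u ≤ 1) {n : ℕ} (hn : -c ≤ n) :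
    besselKernel c z u ≤ (n.factorial : ℝ) * (2 / z) ^ n := by
  -- `e^{-t} ≤ n! / tⁿ` with `t = z / (2u)` absorbs the singularity of `u ^ c` at `0`
  have hexp : exp (-(z * (u + 1 / u)) / 2) ≤ (n.factorial : ℝ) * (2 / z) ^ n * u ^ (n : ℝ) := by
    have hpos : 0 < z / (2 * u) := by positivity
    calc exp (-(z * (u + 1 / u)) / 2) ≤ exp (-(z / (2 * u))) := by
          gcongr
          field_simp
          nlinarith [mul_pos hz hu]
      _ = (exp (z / (2 * u)))⁻¹ := exp_neg _
      _ ≤ ((z / (2 * u)) ^ n / n.factorial)⁻¹ := by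
          gcongr
          exact pow_div_factorial_le_exp _ hpos.le n
      _ = (n.factorial : ℝ) * (2 / z) ^ n * u ^ (n : ℝ) := by
          rw [inv_div, rpow_natCast, div_eq_mul_inv, ← inv_pow, inv_div, mul_div_right_comm,
            mul_pow]
          ring
  calc besselKernel c z u ≤ u ^ c * ((n.factorial : ℝ) * (2 / z) ^ n * u ^ (n : ℝ)) := by
        unfold besselKernel; gcongr
    _ = (n.factorial : ℝ) * (2 / z) ^ n * u ^ (c + n) := by rw [rpow_add hu]; ring
    _ ≤ (n.factorial : ℝ) * (2 / z) ^ n := by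
        apply mul_le_of_le_one_right (by positivity)
        exact rpow_le_one hu.le hu1 (by linarith)

lemma besselKernel_le_of_one_le (hz : 0 ≤ z) (hu : 1 ≤ u) :
    besselKernel c z u ≤ u ^ max c 0 * exp (-(z / 2) * u) := by
  unfold besselKernel
  gcongr
  · exact le_max_left _ _
  · have : 0 ≤ z * (1 / u) := by positivity
    linarith

lemma integrableOn_besselKernel (hz : 0 < z) : IntegrableOn (besselKernel c z) (Ioi 0) := by
  have hmeas (s : Set ℝ) (hs : s ⊆ Ioi 0) (hms : MeasurableSet s) :
      AEStronglyMeasurable (besselKernel c z) (volume.restrict s) :=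
    (continuousOn_besselKernel.mono hs).aestronglyMeasurable hms
  have hnorm {u : ℝ} (hu : 0 < u) : ‖besselKernel c z u‖ = besselKernel c z u :=
    Real.norm_of_nonneg (besselKernel_pos hu).le
  obtain ⟨n, hn⟩ := exists_nat_ge (-c)
  have near_zero : IntegrableOn (besselKernel c z) (Ioc 0 1) := by
    refine Integrable.mono' (integrableOn_const (C := (n.factorial : ℝ) * (2 / z) ^ n)
      measure_Ioc_lt_top.ne)
      (hmeas _ Ioc_subset_Ioi_self measurableSet_Ioc) ?_
    filter_upwards [ae_restrict_mem measurableSet_Ioc] with u hu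
    rw [hnorm hu.1]
    exact besselKernel_le_of_le_one hz hu.1 hu.2 hn
  have near_top : IntegrableOn (besselKernel c z) (Ioi 1) := by
    have hdom : IntegrableOn (fun u : ℝ => u ^ max c 0 * exp (-(z / 2) * u)) (Ioi 0) := by
      simpa using integrableOn_rpow_mul_exp_neg_mul_rpow (p := 1)
        (by linarith [le_max_right c 0] : (-1 : ℝ) < max c 0) one_pos (half_pos hz)
    refine Integrable.mono' (hdom.mono_set (Ioi_subset_Ioi zero_le_one))
      (hmeas _ (Ioi_subset_Ioi zero_le_one) measurableSet_Ioi) ?_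
    filter_upwards [ae_restrict_mem measurableSet_Ioi] with u hu
    rw [hnorm (zero_lt_one.trans hu)]
    exact besselKernel_le_of_one_le hz.le hu.le
  rw [← Ioc_union_Ioi_eq_Ioi zero_le_one]
  exact near_zero.union near_top

lemma besselK_pos {ν : ℝ} (hz : 0 < z) : 0 < besselK ν z := by
  have hsupp : Function.support (besselKernel (ν - 1) z) ∩ Ioi 0 = Ioi 0 :=
    inter_eq_right.2 fun u (hu : 0 < u) => (besselKernel_pos hu).ne'
  have hint : 0 < ∫ u in Ioi 0, besselKernel (ν - 1) z u := by
    rw [setIntegral_pos_iff_support_of_nonneg_ae _ (integrableOn_besselKernel hz), hsupp]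
    · simp
    · filter_upwards [ae_restrict_mem measurableSet_Ioi] with u hu
      exact (besselKernel_pos hu).le
  rw [besselK_eq_integral_besselKernel]
  positivity

lemma hasDerivAt_besselKernel (hu : 0 < u) :
    HasDerivAt (besselKernel c z)
      (c * besselKernel (c - 1) z u - z / 2 * besselKernel c z u
        + z / 2 * besselKernel (c - 2) z u) u := by
  have hpow : HasDerivAt (fun u : ℝ => u ^ c) (c * u ^ (c - 1)) u :=
    hasDerivAt_rpow_const (Or.inl hu.ne')
  have hexp : HasDerivAt (fun u : ℝ => exp (-(z * (u + 1 / u)) / 2))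
      (exp (-(z * (u + 1 / u)) / 2) * (-(z * (1 + -(u ^ 2)⁻¹)) / 2)) u := by
    simp_rw [one_div]
    exact ((((hasDerivAt_id u).add (hasDerivAt_inv hu.ne')).const_mul z).neg.div_const 2).exp
  refine HasDerivAt.congr_deriv (f := fun u => u ^ c * exp (-(z * (u + 1 / u)) / 2))
    (hpow.mul hexp) ?_
  have hpow2 : u ^ (c - 2) = u ^ c * (u ^ 2)⁻¹ := by
    rw [rpow_sub hu, rpow_two, div_eq_mul_inv]
  simp only [besselKernel, hpow2]
  ring

lemma tendsto_besselKernel_atTop (hz : 0 < z) : Tendsto (besselKernel c z) atTop (𝓝 0) := by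
  refine squeeze_zero' ?_ ?_ (tendsto_rpow_mul_exp_neg_mul_atTop_nhds_zero (max c 0) (z / 2)
    (half_pos hz))
  · filter_upwards [eventually_gt_atTop 0] with u hu using (besselKernel_pos hu).le
  · filter_upwards [eventually_ge_atTop 1] with u hu using besselKernel_le_of_one_le hz.le hu

lemma besselKernel_zero (hc : c ≠ 0) : besselKernel c z 0 = 0 := by
  simp [besselKernel, zero_rpow hc]

lemma continuousWithinAt_besselKernel_zero (hc : 0 < c) (hz : 0 ≤ z) :
    ContinuousWithinAt (besselKernel c z) (Ici 0) 0 := by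
  have hpow : Tendsto (fun u : ℝ => u ^ c) (𝓝[Ici 0] 0) (𝓝 0) := by
    have := (continuousAt_rpow_const 0 c (Or.inr hc.le)).continuousWithinAt (s := Ici 0)
    rwa [ContinuousWithinAt, zero_rpow hc.ne'] at this
  rw [ContinuousWithinAt, besselKernel_zero hc.ne']
  refine squeeze_zero' ?_ ?_ hpow
  · filter_upwards [self_mem_nhdsWithin] with u (hu : 0 ≤ u)
    unfold besselKernel; positivity
  · filter_upwards [self_mem_nhdsWithin] with u (hu : 0 ≤ u)
    refine mul_le_of_le_one_right (by positivity) (exp_le_one_iff.2 ?_)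
    have : 0 ≤ z * (u + 1 / u) := by positivity
    linarith

end Kernel

lemma besselK_recurrence {ν z : ℝ} (hz : 0 < z) (hν : 0 < ν) :
    z * besselK (ν + 1) z = 2 * ν * besselK ν z + z * besselK (ν - 1) z := by
  have hint (c : ℝ) := integrableOn_besselKernel (c := c) hz
  have h1 : IntegrableOn (fun u => ν * besselKernel (ν - 1) z u) (Ioi 0) := (hint _).const_mul ν
  have h2 : IntegrableOn (fun u => z / 2 * besselKernel ν z u) (Ioi 0) := (hint _).const_mul _
  have h3 : IntegrableOn (fun u => z / 2 * besselKernel (ν - 2) z u) (Ioi 0) :=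
    (hint _).const_mul _
  have h12 : IntegrableOn (fun u => ν * besselKernel (ν - 1) z u - z / 2 * besselKernel ν z u)
    (Ioi 0) := h1.sub h2
  -- the boundary terms vanish: the kernel tends to `0` at both ends of `(0, ∞)`
  have hFTC := integral_Ioi_of_hasDerivAt_of_tendsto
    (continuousWithinAt_besselKernel_zero hν hz.le) (fun u hu => hasDerivAt_besselKernel hu)
    (h12.add h3) (tendsto_besselKernel_atTop hz)
  rw [integral_add h12 h3, integral_sub h1 h2, integral_const_mul, integral_const_mul,
    integral_const_mul, besselKernel_zero hν.ne'] at hFTC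
  simp only [besselK_eq_integral_besselKernel, add_sub_cancel_right, sub_sub, one_add_one_eq_two]
  linear_combination -hFTC

section Ratio

variable {ν z : ℝ}

lemma besselR_pos (hz : 0 < z) : 0 < besselR ν z :=
  div_pos (besselK_pos hz) (besselK_pos hz)

lemma besselR_eq_add_inv (hz : 0 < z) (hν : 0 < ν) :
    besselR ν z = 2 * ν / z + (besselR (ν - 1) z)⁻¹ := by
  have hK := (besselK_pos (ν := ν) hz).ne'
  have hrec := besselK_recurrence hz hν
  rw [besselR, besselR, sub_add_cancel, inv_div]
  field_simp
  linear_combination hrec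

lemma div_le_besselR (hz : 0 < z) (hν : 0 < ν) : 2 * ν / z ≤ besselR ν z := by
  rw [besselR_eq_add_inv hz hν]
  exact le_add_of_nonneg_right (inv_pos.2 (besselR_pos hz)).le

lemma besselR_le (hz : 0 < z) (hν : 1 < ν) : besselR ν z ≤ 2 * ν / z + z / (2 * (ν - 1)) := by
  rw [besselR_eq_add_inv hz (by linarith), ← inv_div (2 * (ν - 1)) z]
  gcongr
  exact div_le_besselR hz (by linarith)

end Ratio

lemma tendsto_besselR_mul_div {α : Type*} {l : Filter α} {ν z : α → ℝ}
    (hν : Tendsto ν l atTop) (hz : ∀ᶠ t in l, 0 < z t)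
    (hzν : Tendsto (fun t => z t / ν t) l (𝓝 0)) :
    Tendsto (fun t => besselR (ν t) (z t) * z t / (2 * ν t)) l (𝓝 1) := by
  have hupper : Tendsto (fun t => 1 + (z t / ν t) ^ 2 / 2) l (𝓝 1) := by
    simpa using ((hzν.pow 2).div_const 2).const_add 1
  refine tendsto_of_tendsto_of_tendsto_of_le_of_le' tendsto_const_nhds hupper ?_ ?_
  all_goals filter_upwards [hz, hν.eventually_ge_atTop 2] with t hzt hνt
  · rw [le_div_iff₀ (by positivity), one_mul]
    have := div_le_besselR hzt (by linarith : 0 < ν t)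
    rwa [div_le_iff₀ hzt] at this
  · have hνt' : 0 < ν t - 1 := by linarith
    calc besselR (ν t) (z t) * z t / (2 * ν t)
        ≤ (2 * ν t / z t + z t / (2 * (ν t - 1))) * z t / (2 * ν t) := by
          gcongr
          exact besselR_le hzt (by linarith)
      _ = 1 + z t ^ 2 / (4 * ν t * (ν t - 1)) := by
          field_simp
          ring
      _ ≤ 1 + (z t / ν t) ^ 2 / 2 := by
          rw [div_pow, div_div]
          gcongr 1 + ?_
          exact div_le_div_of_nonneg_left (by positivity) (by positivity) (by nlinarith)

/-- **Lemma 1: asymptotics of the Bessel ratio.**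
For all `a, b > 0`, `R_{bν}(a√ν) ∼ 2b√ν / a` as `ν → ∞`. -/
theorem besselR_asymptotic (a b : ℝ) (ha : 0 < a) (hb : 0 < b) :
    Tendsto (fun ν : ℝ =>
        besselR (b * ν) (a * Real.sqrt ν) * a / (2 * b * Real.sqrt ν))
      atTop (nhds 1) := by
  have hν : Tendsto (fun ν : ℝ => b * ν) atTop atTop := tendsto_id.const_mul_atTop hb
  have hz : ∀ᶠ ν : ℝ in atTop, 0 < a * √ν := by
    filter_upwards [eventually_gt_atTop 0] with ν hν
    positivity
  have hzν : Tendsto (fun ν : ℝ => a * √ν / (b * ν)) atTop (𝓝 0) := by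
    have hinv := (tendsto_inv_atTop_zero.comp tendsto_sqrt_atTop).const_mul (a / b)
    rw [mul_zero] at hinv
    refine hinv.congr' ?_
    filter_upwards [eventually_gt_atTop 0] with ν hν
    rw [Function.comp_apply]
    field_simp
    rw [sq_sqrt hν.le]
  refine (tendsto_besselR_mul_div hν hz hzν).congr' ?_
  filter_upwards [eventually_gt_atTop 0] with ν hν
  field_simp
  rw [sq_sqrt hν.le]
end

section
/- Fix α₀ > 0, β₀ > 0, V > 0, integers K ≥ 0 and M ≥ 1, counts n₁,…,n_K ∈ ℕ with s = Σ_{k=1}^K n_k, a value θ̄ > 0, and set ω = VK + 1/β₀. Then lim_{ξ→∞} √(ξMθ̄/ω) · R_{α₀ − Mξ + s}(2√(ω ξ M θ̄)) = θ̄; that is, as the coefficient of variation 1/√ξ of the expert opinions tends to 0, the posterior mean of the Poisson intensity converges to the experts' common opinion θ̄. -/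
open MeasureTheory ProbabilityTheory Filter

/-!
With `c = √(ω / φ)`, the substitution `u = c x` in the integral defining `besselK` shows that
`√(φ / ω) R_ν(2√(ωφ))` is the mean of the density proportional to `x^(ν-1) exp(-(ωx + φ/x))`
on `(0, ∞)`. For `ν = m - t` and `φ = tθ` this density is `x^(m-1) e^(-ωx) · e^(-t H(x))` with
`H(x) = log x + θ/x`, whose only minimum on `(0, ∞)` is at `x = θ`. As `t → ∞` the mass
concentrates where `H` is within any `δ` of its minimum (Laplace's principle), so the mean tends to
`θ`; in the model `t = Mξ` and `m = α₀ + s`.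
-/

open Set Real Topology

section GibbsMean

variable {μ : Measure ℝ}

lemma integrable_abs_sub_mul {F : ℝ → ℝ} (hF : ∀ᵐ x ∂μ, 0 ≤ F x) (hFi : Integrable F μ)
    (hxF : Integrable (fun x => x * F x) μ) (θ : ℝ) :
    Integrable (fun x => |x - θ| * F x) μ :=
  (hxF.sub (hFi.const_mul θ)).abs.congr <| by
    filter_upwards [hF] with x hx
    simp only [Pi.sub_apply]
    rw [← sub_mul, abs_mul, abs_of_nonneg hx]

lemma abs_integral_mul_sub_le {F : ℝ → ℝ} (hF : ∀ᵐ x ∂μ, 0 ≤ F x) (hFi : Integrable F μ)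
    (hxF : Integrable (fun x => x * F x) μ) (θ : ℝ) :
    |(∫ x, x * F x ∂μ) - θ * ∫ x, F x ∂μ| ≤ ∫ x, |x - θ| * F x ∂μ := by
  rw [← integral_const_mul, ← integral_sub hxF (hFi.const_mul θ), ← Real.norm_eq_abs]
  refine (norm_integral_le_integral_norm _).trans_eq (integral_congr_ae ?_)
  filter_upwards [hF] with x hx
  rw [Real.norm_eq_abs, ← sub_mul, abs_mul, abs_of_nonneg hx]

lemma setIntegral_pos_of_ae_pos {f : ℝ → ℝ} {s : Set ℝ} (hf : ∀ᵐ x ∂μ, 0 < f x)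
    (hfi : IntegrableOn f s μ) (hs : 0 < μ s) : 0 < ∫ x in s, f x ∂μ := by
  have hnull : μ (Function.support f)ᶜ = 0 :=
    measure_mono_null (fun x hx => by simp_all) (ae_iff.1 hf)
  rw [integral_pos_iff_support_of_nonneg_ae (ae_restrict_of_ae (hf.mono fun x hx => hx.le)) hfi,
    measure_congr (ae_restrict_of_ae (ae_eq_univ.2 hnull)), Measure.restrict_apply_univ]
  exact hs

variable {g H : ℝ → ℝ} {θ : ℝ}

lemma mul_exp_neg_mul_eq (a h t : ℝ) :
    a * exp (-(t * h)) = exp (-((t - 1) * h)) * (a * exp (-h)) := by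
  rw [mul_left_comm, ← exp_add]; ring_nf

lemma exp_mul_setIntegral_le_integral {s : Set ℝ} {c t : ℝ} (hs : MeasurableSet s)
    (hg : ∀ᵐ x ∂μ, 0 ≤ g x) (ht : 1 ≤ t) (hint : Integrable (fun x => g x * exp (-(t * H x))) μ)
    (hc : ∀ x ∈ s, H x ≤ c) :
    exp (-((t - 1) * c)) * ∫ x in s, g x * exp (-H x) ∂μ ≤ ∫ x, g x * exp (-(t * H x)) ∂μ := by
  have hg_s : ∀ᵐ x ∂μ.restrict s, 0 ≤ g x := ae_restrict_of_ae hg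
  rw [← integral_const_mul]
  refine (integral_mono_of_nonneg ?_ hint.integrableOn ?_).trans
    (setIntegral_le_integral hint (hg.mono fun x hx => by positivity))
  · filter_upwards [hg_s] with x hx using by positivity
  · filter_upwards [ae_restrict_mem hs, hg_s] with x hx hgx
    rw [mul_exp_neg_mul_eq]
    gcongr
    nlinarith [hc x hx]

lemma integral_abs_sub_mul_le {ε c t : ℝ} (hε : 0 ≤ ε) (hg : ∀ᵐ x ∂μ, 0 ≤ g x) (ht : 1 ≤ t)
    (hint : Integrable (fun x => g x * exp (-(t * H x))) μ)
    (hint_id : Integrable (fun x => x * (g x * exp (-(t * H x)))) μ)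
    (hint₁ : Integrable (fun x => g x * exp (-H x)) μ)
    (hint_id₁ : Integrable (fun x => x * (g x * exp (-H x))) μ)
    (hfar : ∀ᵐ x ∂μ, ε ≤ |x - θ| → c ≤ H x) :
    ∫ x, |x - θ| * (g x * exp (-(t * H x))) ∂μ ≤
      ε * ∫ x, g x * exp (-(t * H x)) ∂μ +
        exp (-((t - 1) * c)) * ∫ x, |x - θ| * (g x * exp (-H x)) ∂μ := by
  have hnonneg : ∀ᵐ x ∂μ, 0 ≤ g x * exp (-(t * H x)) := hg.mono fun x hx => by positivity
  have hint_abs₁ : Integrable (fun x => |x - θ| * (g x * exp (-H x))) μ :=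
    integrable_abs_sub_mul (hg.mono fun x hx => by positivity) hint₁ hint_id₁ θ
  rw [← integral_const_mul, ← integral_const_mul,
    ← integral_add (hint.const_mul ε) (hint_abs₁.const_mul _)]
  refine integral_mono_ae (integrable_abs_sub_mul hnonneg hint hint_id θ)
    ((hint.const_mul ε).add (hint_abs₁.const_mul _)) ?_
  filter_upwards [hg, hfar, hnonneg] with x hgx hfarx hx
  rcases lt_or_ge |x - θ| ε with hnear | hfar'
  · have : 0 ≤ exp (-((t - 1) * c)) * (|x - θ| * (g x * exp (-H x))) := by positivity
    nlinarith
  · have hexp : exp (-((t - 1) * H x)) ≤ exp (-((t - 1) * c)) :=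
      exp_le_exp.2 (by nlinarith [hfarx hfar'])
    calc |x - θ| * (g x * exp (-(t * H x)))
        = exp (-((t - 1) * H x)) * (|x - θ| * (g x * exp (-H x))) := by
          rw [mul_exp_neg_mul_eq (g x)]; ring
      _ ≤ exp (-((t - 1) * c)) * (|x - θ| * (g x * exp (-H x))) := by gcongr
      _ ≤ _ := le_add_of_nonneg_left (by positivity)

noncomputable def gibbsMean (μ : Measure ℝ) (g H : ℝ → ℝ) (t : ℝ) : ℝ :=
  (∫ x, x * (g x * exp (-(t * H x))) ∂μ) / ∫ x, g x * exp (-(t * H x)) ∂μ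

lemma abs_gibbsMean_sub_le {s : Set ℝ} {ε c δ t : ℝ} (hs : MeasurableSet s) (hε : 0 ≤ ε)
    (hg : ∀ᵐ x ∂μ, 0 ≤ g x) (ht : 1 ≤ t)
    (hint : Integrable (fun x => g x * exp (-(t * H x))) μ)
    (hint_id : Integrable (fun x => x * (g x * exp (-(t * H x)))) μ)
    (hint₁ : Integrable (fun x => g x * exp (-H x)) μ)
    (hint_id₁ : Integrable (fun x => x * (g x * exp (-H x))) μ)
    (hnear : ∀ x ∈ s, H x ≤ c) (hfar : ∀ᵐ x ∂μ, ε ≤ |x - θ| → c + δ ≤ H x)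
    (hmass : 0 < ∫ x in s, g x * exp (-H x) ∂μ) :
    |gibbsMean μ g H t - θ| ≤
      ε + (∫ x, |x - θ| * (g x * exp (-H x)) ∂μ) / (∫ x in s, g x * exp (-H x) ∂μ) *
        exp (-((t - 1) * δ)) := by
  set B := ∫ x, g x * exp (-(t * H x)) ∂μ
  set C := ∫ x, |x - θ| * (g x * exp (-H x)) ∂μ
  set m := ∫ x in s, g x * exp (-H x) ∂μ
  have hnonneg : ∀ᵐ x ∂μ, 0 ≤ g x * exp (-(t * H x)) := hg.mono fun x hx => by positivity
  have hB : exp (-((t - 1) * c)) * m ≤ B := exp_mul_setIntegral_le_integral hs hg ht hint hnear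
  have hBpos : 0 < B := lt_of_lt_of_le (by positivity) hB
  have hC : 0 ≤ C := integral_nonneg_of_ae (hg.mono fun x hx => by positivity)
  have hAB : |(∫ x, x * (g x * exp (-(t * H x))) ∂μ) - θ * B| ≤
      ε * B + exp (-((t - 1) * (c + δ))) * C :=
    (abs_integral_mul_sub_le hnonneg hint hint_id θ).trans
      (integral_abs_sub_mul_le hε hg ht hint hint_id hint₁ hint_id₁ hfar)
  have htail : exp (-((t - 1) * (c + δ))) * C ≤ C / m * exp (-((t - 1) * δ)) * B :=
    calc exp (-((t - 1) * (c + δ))) * C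
        = C / m * exp (-((t - 1) * δ)) * (exp (-((t - 1) * c)) * m) := by
          rw [show -((t - 1) * (c + δ)) = -((t - 1) * δ) + -((t - 1) * c) by ring, exp_add]
          field_simp
      _ ≤ C / m * exp (-((t - 1) * δ)) * B := by gcongr
  rw [gibbsMean, div_sub' hBpos.ne', abs_div, abs_of_pos hBpos, div_le_iff₀ hBpos, mul_comm B θ]
  linarith

theorem tendsto_gibbsMean_atTop (hg : ∀ᵐ x ∂μ, 0 < g x)
    (hint : ∀ t ≥ 1, Integrable (fun x => g x * exp (-(t * H x))) μ)
    (hint_id : ∀ t ≥ 1, Integrable (fun x => x * (g x * exp (-(t * H x)))) μ)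
    (hsupp : ∀ η > 0, 0 < μ (Icc (θ - η) (θ + η))) (hH : ContinuousAt H θ)
    (hsep : ∀ ε > 0, ∃ δ > 0, ∀ᵐ x ∂μ, ε ≤ |x - θ| → H θ + δ ≤ H x) :
    Tendsto (gibbsMean μ g H) atTop (𝓝 θ) := by
  have hint₁ : Integrable (fun x => g x * exp (-H x)) μ := by simpa using hint 1 le_rfl
  have hint_id₁ : Integrable (fun x => x * (g x * exp (-H x))) μ := by
    simpa using hint_id 1 le_rfl
  rw [Metric.tendsto_nhds]
  intro ε hε
  obtain ⟨δ, hδ, hfar⟩ := hsep (ε / 2) (half_pos hε)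
  obtain ⟨η, hη, hnear⟩ := Metric.continuousAt_iff.1 hH (δ / 2) (half_pos hδ)
  set s := Icc (θ - η / 2) (θ + η / 2)
  have hnear_s : ∀ x ∈ s, H x ≤ H θ + δ / 2 := fun x hx => by
    have := hnear (x := x) (by rw [Real.dist_eq, abs_lt]; constructor <;> linarith [hx.1, hx.2])
    rw [Real.dist_eq, abs_lt] at this
    linarith
  have hmass : 0 < ∫ x in s, g x * exp (-H x) ∂μ :=
    setIntegral_pos_of_ae_pos (hg.mono fun x hx => by positivity) hint₁.integrableOn
      (hsupp _ (half_pos hη))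
  set r := (∫ x, |x - θ| * (g x * exp (-H x)) ∂μ) / ∫ x in s, g x * exp (-H x) ∂μ
  have hdecay : Tendsto (fun t : ℝ => r * exp (-((t - 1) * (δ / 2)))) atTop (𝓝 0) := by
    have hlin : Tendsto (fun t : ℝ => (t - 1) * (δ / 2)) atTop atTop := by
      simpa only [id, sub_eq_add_neg] using
        (tendsto_atTop_add_const_right _ (-1) tendsto_id).atTop_mul_const (half_pos hδ)
    simpa using (tendsto_exp_neg_atTop_nhds_zero.comp hlin).const_mul r
  filter_upwards [eventually_ge_atTop 1, hdecay.eventually (gt_mem_nhds (half_pos hε))]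
    with t ht hrt
  have := abs_gibbsMean_sub_le (c := H θ + δ / 2) (δ := δ / 2) measurableSet_Icc (half_pos hε).le
    (hg.mono fun x hx => hx.le) ht (hint t ht) (hint_id t ht) hint₁ hint_id₁ hnear_s
    (hfar.mono fun x hx hx' => by linarith [hx hx']) hmass
  rw [Real.dist_eq]
  linarith

end GibbsMean

section PosteriorMean

variable {ω φ θ : ℝ}

lemma continuousOn_rpow_mul_exp_neg_mul_add_div (p : ℝ) :
    ContinuousOn (fun x => x ^ p * exp (-(ω * x + φ / x))) (Ioi 0) := by
  have hx : ∀ x ∈ Ioi (0 : ℝ), x ≠ 0 := fun x hx => ne_of_gt hx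
  exact (continuousOn_id.rpow_const fun x hx' => Or.inl (hx x hx')).mul
    (continuous_exp.comp_continuousOn
      ((continuousOn_const.mul continuousOn_id).add
        (continuousOn_const.div continuousOn_id hx)).neg)

lemma integrableOn_rpow_mul_exp_neg_mul_add_div_of_neg_one_lt {p : ℝ} (hp : -1 < p)
    (hω : 0 < ω) (hφ : 0 ≤ φ) :
    IntegrableOn (fun x => x ^ p * exp (-(ω * x + φ / x))) (Ioi 0) := by
  refine (integrableOn_rpow_mul_exp_neg_mul_rpow hp one_pos hω).mono' ?_ ?_
  · exact (continuousOn_rpow_mul_exp_neg_mul_add_div p).aestronglyMeasurable measurableSet_Ioi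
  · filter_upwards [ae_restrict_mem measurableSet_Ioi] with x hx
    have hx : 0 < x := hx
    rw [norm_of_nonneg (by positivity), rpow_one]
    gcongr
    linarith [div_nonneg hφ hx.le]

lemma integrableOn_rpow_mul_exp_neg_mul_add_div (p : ℝ) (hω : 0 < ω) (hφ : 0 < φ) :
    IntegrableOn (fun x => x ^ p * exp (-(ω * x + φ / x))) (Ioi 0) := by
  have hlarge := integrableOn_rpow_mul_exp_neg_mul_add_div_of_neg_one_lt
    (by linarith [abs_nonneg p] : -1 < |p|) hω hφ.le
  -- the substitution `x ↦ x⁻¹` exchanges `ω` and `φ` and sends the exponent `q` to `-q - 2`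
  have hsmall : IntegrableOn (fun x => x ^ (-|p| - 2) * exp (-(ω * x + φ / x))) (Ioi 0) := by
    rw [← integrableOn_Ioi_comp_rpow_iff' _ (neg_ne_zero.2 one_ne_zero)]
    refine (integrableOn_rpow_mul_exp_neg_mul_add_div_of_neg_one_lt
      (by linarith [abs_nonneg p] : -1 < |p|) hφ hω.le).congr_fun (fun x hx => ?_) measurableSet_Ioi
    have hx : 0 < x := hx
    rw [rpow_neg_one, inv_rpow hx.le, ← rpow_neg hx.le, smul_eq_mul, ← mul_assoc, ← rpow_add hx]
    dsimp only
    rw [show -1 - 1 + -(-|p| - 2) = |p| by ring, div_inv_eq_mul, ← div_eq_mul_inv, add_comm (ω / x)]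
  refine (hlarge.add hsmall).mono' ?_ ?_
  · exact (continuousOn_rpow_mul_exp_neg_mul_add_div p).aestronglyMeasurable measurableSet_Ioi
  · filter_upwards [ae_restrict_mem measurableSet_Ioi] with x hx
    have hx : 0 < x := hx
    rw [norm_of_nonneg (by positivity), Pi.add_apply, ← add_mul]
    gcongr
    rcases le_total 1 x with h1 | h1
    · linarith [rpow_le_rpow_of_exponent_le h1 (le_abs_self p), rpow_nonneg hx.le (-|p| - 2)]
    · linarith [rpow_le_rpow_of_exponent_ge hx h1 (by linarith [neg_abs_le p] : -|p| - 2 ≤ p),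
        rpow_nonneg hx.le |p|]

lemma besselK_eq_rpow_mul_integral (ν z : ℝ) {c : ℝ} (hc : 0 < c) :
    besselK ν z =
      c ^ ν / 2 * ∫ x in Ioi 0, x ^ (ν - 1) * exp (-(z * c / 2 * x + z / (2 * c) / x)) := by
  have hsubst := integral_comp_mul_left_Ioi'
    (fun u => u ^ (ν - 1) * exp (-(z * (u + 1 / u)) / 2)) 0 hc
  rw [mul_zero] at hsubst
  rw [besselK, ← hsubst, smul_eq_mul, ← mul_assoc, ← integral_const_mul, ← integral_const_mul]
  refine setIntegral_congr_fun measurableSet_Ioi fun x hx => ?_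
  have hx : 0 < x := hx
  rw [mul_rpow hc.le hx.le, rpow_sub_one hc.ne']
  have hexp : -(z * (c * x + 1 / (c * x))) / 2 = -(z * c / 2 * x + z / (2 * c) / x) := by
    field_simp
  rw [hexp]
  field_simp

lemma sqrt_div_mul_besselR (ν : ℝ) (hω : 0 < ω) (hφ : 0 < φ) :
    √(φ / ω) * besselR ν (2 * √(ω * φ)) =
      (∫ x in Ioi 0, x * (x ^ (ν - 1) * exp (-(ω * x + φ / x)))) /
        ∫ x in Ioi 0, x ^ (ν - 1) * exp (-(ω * x + φ / x)) := by
  set c := √(ω / φ)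
  have hc : 0 < c := sqrt_pos.2 (div_pos hω hφ)
  have hω_eq : 2 * √(ω * φ) * c / 2 = ω := by
    rw [mul_div_right_comm, mul_div_cancel_left₀ _ two_ne_zero, ← sqrt_mul (by positivity),
      show ω * φ * (ω / φ) = ω ^ 2 by field_simp, sqrt_sq hω.le]
  have hφ_eq : 2 * √(ω * φ) / (2 * c) = φ := by
    rw [mul_div_mul_left _ _ two_ne_zero, ← sqrt_div' _ (by positivity),
      show ω * φ / (ω / φ) = φ ^ 2 by field_simp, sqrt_sq hφ.le]
  have hc_inv : √(φ / ω) * c = 1 := by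
    rw [← sqrt_mul (by positivity), show φ / ω * (ω / φ) = 1 by field_simp, sqrt_one]
  have hnum : ∫ x in Ioi 0, x ^ ν * exp (-(ω * x + φ / x)) =
      ∫ x in Ioi 0, x * (x ^ (ν - 1) * exp (-(ω * x + φ / x))) :=
    setIntegral_congr_fun measurableSet_Ioi fun x hx => by
      have hx : x ≠ 0 := ne_of_gt hx
      rw [rpow_sub_one hx]; field_simp
  rw [besselR, besselK_eq_rpow_mul_integral _ _ hc, besselK_eq_rpow_mul_integral _ _ hc, hω_eq,
    hφ_eq, add_sub_cancel_right, hnum, rpow_add_one hc.ne', mul_div_mul_comm,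
    show c ^ ν * c / 2 / (c ^ ν / 2) = c by field_simp, ← mul_assoc, hc_inv, one_mul]

lemma strictMonoOn_log_add_div (hθ : 0 < θ) :
    StrictMonoOn (fun x => log x + θ / x) (Ici θ) := by
  intro a ha b hb hab
  have ha₀ : 0 < a := hθ.trans_le ha
  have hb₀ : 0 < b := ha₀.trans hab
  have hlog := log_lt_sub_one_of_pos (div_pos ha₀ hb₀) ((div_lt_one hb₀).2 hab).ne
  rw [log_div ha₀.ne' hb₀.ne'] at hlog
  have hfrac : θ / a - θ / b ≤ 1 - a / b := by
    rw [div_sub_div _ _ ha₀.ne' hb₀.ne', one_sub_div hb₀.ne', div_le_div_iff₀ (by positivity) hb₀]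
    nlinarith [mul_nonneg (mul_nonneg (sub_nonneg.2 hab.le) hb₀.le) (sub_nonneg.2 (mem_Ici.1 ha))]
  simp only
  linarith

lemma strictAntiOn_log_add_div : StrictAntiOn (fun x => log x + θ / x) (Ioc 0 θ) := by
  intro a ha b hb hab
  have hb₀ : 0 < b := ha.1.trans hab
  have hlog := log_lt_sub_one_of_pos (div_pos hb₀ ha.1) ((one_lt_div ha.1).2 hab).ne'
  rw [log_div hb₀.ne' ha.1.ne'] at hlog
  have hfrac : b / a - 1 ≤ θ / a - θ / b := by
    rw [div_sub_div _ _ ha.1.ne' hb₀.ne', div_sub_one ha.1.ne',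
      div_le_div_iff₀ ha.1 (mul_pos ha.1 hb₀)]
    nlinarith [mul_nonneg (mul_nonneg (sub_nonneg.2 hab.le) ha.1.le) (sub_nonneg.2 hb.2)]
  simp only
  linarith

lemma exists_pos_add_le_log_add_div (hθ : 0 < θ) {ε : ℝ} (hε : 0 < ε) :
    ∃ δ > 0, ∀ x > 0, ε ≤ |x - θ| → log θ + θ / θ + δ ≤ log x + θ / x := by
  set H := fun x => log x + θ / x
  -- shrinking `ε` keeps `θ - ε'` inside `(0, θ]`, where `H` is antitone
  set ε' := min ε (θ / 2)
  have hε' : 0 < ε' := lt_min hε (half_pos hθ)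
  have hε'θ : ε' < θ := (min_le_right _ _).trans_lt (half_lt_self hθ)
  have hleft : H θ < H (θ - ε') :=
    strictAntiOn_log_add_div ⟨by linarith, by linarith⟩ ⟨hθ, le_rfl⟩ (by linarith)
  have hright : H θ < H (θ + ε') :=
    strictMonoOn_log_add_div hθ self_mem_Ici (by simp [hε'.le]) (by linarith)
  refine ⟨min (H (θ - ε')) (H (θ + ε')) - H θ, sub_pos.2 (lt_min hleft hright),
    fun x hx hεx => ?_⟩
  rcases le_abs'.1 ((min_le_left ε _).trans hεx) with h | h
  · have := (strictAntiOn_log_add_div (θ := θ)).antitoneOn (a := x) (b := θ - ε') ⟨hx, by linarith⟩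
      ⟨by linarith, by linarith⟩ (by linarith)
    linarith [min_le_left (H (θ - ε')) (H (θ + ε'))]
  · have := (strictMonoOn_log_add_div hθ).monotoneOn (a := θ + ε') (b := x) (by simp [hε'.le])
      (by simp; linarith) (by linarith)
    linarith [min_le_right (H (θ - ε')) (H (θ + ε'))]

lemma rpow_mul_exp_mul_exp_neg_mul_log_add_div (m t : ℝ) {x : ℝ} (hx : 0 < x) :
    x ^ (m - 1) * exp (-(ω * x)) * exp (-(t * (log x + θ / x))) =
      x ^ (m - t - 1) * exp (-(ω * x + t * θ / x)) := by
  rw [show m - t - 1 = (m - 1) + -t by ring, rpow_add hx, rpow_def_of_pos hx (-t), mul_assoc,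
    mul_assoc, ← exp_add, ← exp_add]
  ring_nf

lemma sqrt_mul_div_mul_besselR_sub_eq_gibbsMean (m : ℝ) (hω : 0 < ω) (hθ : 0 < θ) {t : ℝ}
    (ht : 0 < t) :
    √(t * θ / ω) * besselR (m - t) (2 * √(ω * (t * θ))) =
      gibbsMean (volume.restrict (Ioi 0)) (fun x => x ^ (m - 1) * exp (-(ω * x)))
        (fun x => log x + θ / x) t := by
  have hpt : EqOn (fun x => x ^ (m - 1) * exp (-(ω * x)) * exp (-(t * (log x + θ / x))))
      (fun x => x ^ (m - t - 1) * exp (-(ω * x + t * θ / x))) (Ioi 0) :=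
    fun x hx => rpow_mul_exp_mul_exp_neg_mul_log_add_div m t hx
  rw [sqrt_div_mul_besselR _ hω (mul_pos ht hθ), gibbsMean,
    setIntegral_congr_fun measurableSet_Ioi hpt,
    setIntegral_congr_fun measurableSet_Ioi fun x hx => congrArg (x * ·) (hpt hx)]

theorem tendsto_sqrt_mul_div_mul_besselR_sub (m : ℝ) (hω : 0 < ω) (hθ : 0 < θ) :
    Tendsto (fun t => √(t * θ / ω) * besselR (m - t) (2 * √(ω * (t * θ)))) atTop (𝓝 θ) := by
  have hint : ∀ t ≥ (1 : ℝ), IntegrableOn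
      (fun x => x ^ (m - 1) * exp (-(ω * x)) * exp (-(t * (log x + θ / x)))) (Ioi 0) :=
    fun t ht => (integrableOn_rpow_mul_exp_neg_mul_add_div (m - t - 1) hω
      (by positivity : 0 < t * θ)).congr_fun
      (fun x hx => (rpow_mul_exp_mul_exp_neg_mul_log_add_div m t hx).symm) measurableSet_Ioi
  have hint_id : ∀ t ≥ (1 : ℝ), IntegrableOn
      (fun x => x * (x ^ (m - 1) * exp (-(ω * x)) * exp (-(t * (log x + θ / x))))) (Ioi 0) :=
    fun t ht => (integrableOn_rpow_mul_exp_neg_mul_add_div (m - t) hω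
      (by positivity : 0 < t * θ)).congr_fun (fun x hx => by
        have hx₀ : x ≠ 0 := ne_of_gt hx
        rw [rpow_mul_exp_mul_exp_neg_mul_log_add_div m t hx, rpow_sub_one hx₀]
        field_simp) measurableSet_Ioi
  have hsupp : ∀ η > 0, 0 < volume.restrict (Ioi 0) (Icc (θ - η) (θ + η)) := fun η hη => by
    rw [Measure.restrict_apply measurableSet_Icc]
    calc 0 < volume (Icc θ (θ + η)) := by simp [hη]
      _ ≤ volume (Icc (θ - η) (θ + η) ∩ Ioi 0) :=
        measure_mono fun x hx => ⟨⟨by linarith [hx.1], hx.2⟩, hθ.trans_le hx.1⟩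
  have hsep : ∀ ε > 0, ∃ δ > 0, ∀ᵐ x ∂volume.restrict (Ioi 0), ε ≤ |x - θ| →
      log θ + θ / θ + δ ≤ log x + θ / x := fun ε hε => by
    obtain ⟨δ, hδ, h⟩ := exists_pos_add_le_log_add_div hθ hε
    exact ⟨δ, hδ, (ae_restrict_mem measurableSet_Ioi).mono h⟩
  refine (tendsto_gibbsMean_atTop (θ := θ) ((ae_restrict_mem measurableSet_Ioi).mono fun x hx => ?_)
    hint hint_id hsupp
    ((continuousAt_log hθ.ne').add (continuousAt_const.div continuousAt_id hθ.ne'))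
    hsep).congr' ?_
  · have hx : 0 < x := hx
    positivity
  · filter_upwards [eventually_gt_atTop 0] with t ht
    exact (sqrt_mul_div_mul_besselR_sub_eq_gibbsMean m hω hθ ht).symm

end PosteriorMean

theorem posterior_mean_tendsto_of_precise_experts_general
    (α₀ β₀ V θbar : ℝ) (hβ₀ : 0 < β₀) (hV : 0 < V) (hθbar : 0 < θbar)
    (K M : ℕ) (hM : 1 ≤ M)
    (s ω : ℝ) (hω : ω = V * K + 1 / β₀) :
    Tendsto (fun ξ : ℝ =>
        Real.sqrt (ξ * M * θbar / ω) *
          besselR (α₀ - M * ξ + s) (2 * Real.sqrt (ω * (ξ * M * θbar))))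
      atTop (nhds θbar) := by
  have hω₀ : 0 < ω := by rw [hω]; positivity
  have hM₀ : (0 : ℝ) < M := Nat.cast_pos.2 hM
  refine ((tendsto_sqrt_mul_div_mul_besselR_sub (α₀ + s) hω₀ hθbar).comp
    (tendsto_id.const_mul_atTop hM₀)).congr fun ξ => ?_
  simp only [Function.comp_apply, id]
  rw [show α₀ + s - M * ξ = α₀ - M * ξ + s by ring, mul_comm ξ]

/-- **Theorem 2b: vanishing coefficient of variation of the experts.**
As `ξ → ∞` (i.e. the coefficient of variation `1/√ξ` of the expert opinions tends to 0),
the posterior mean of the Poisson intensity converges to the experts' opinion `θ̄`. -/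
theorem posterior_mean_tendsto_of_precise_experts
    (α₀ β₀ V θbar : ℝ) (hα₀ : 0 < α₀) (hβ₀ : 0 < β₀) (hV : 0 < V) (hθbar : 0 < θbar)
    (K M : ℕ) (hM : 1 ≤ M) (n : Fin K → ℕ)
    (s ω : ℝ) (hs : s = ∑ k, (n k : ℝ)) (hω : ω = V * K + 1 / β₀) :
    Tendsto (fun ξ : ℝ =>
        Real.sqrt (ξ * M * θbar / ω) *
          besselR (α₀ - M * ξ + s) (2 * Real.sqrt (ω * (ξ * M * θbar))))
      atTop (nhds θbar) :=
  posterior_mean_tendsto_of_precise_experts_general α₀ β₀ V θbar hβ₀ hV hθbar K M hM s ω hω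
end

section
/- Fix λ > 0, ξ > 0, α₀ > 0, β₀ > 0, V > 0, an integer K ≥ 0 and counts n₁,…,n_K ∈ ℕ with s = Σ_{k=1}^K n_k, and set ω = VK + 1/β₀. Let (θ_m)_{m≥1} be a sequence of i.i.d. random variables on a probability space, each with the Gamma distribution of shape ξ and scale λ/ξ. For M ≥ 1 put ν_M = α₀ − 1 − Mξ + s and φ_M = ξ·Σ_{m=1}^M θ_m. Then almost surely, √(φ_M/ω) · R_{ν_M+1}(2√(ω φ_M)) converges to λ as M → ∞. -/
/-!
Substituting `u = √(ω/φ) x` turns the posterior mean into the ratio `r_p = I(p+1)/I(p)` of the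
generalized inverse Gaussian integrals `I(p) = ∫₀^∞ x^(p-1) exp(-ωx - φ/x) dx`, at `p = ν + 1`.
Integration by parts gives `ω I(p+1) = p I(p) + φ I(p-1)` and Cauchy–Schwarz gives
`I(p)² ≤ I(p-1) I(p+1)`, so `r_p` is nondecreasing in `p`. Fed into the recurrence at `p` and at
`p + 1`, this traps `r_p` between the positive roots of `ω r² = p r + φ` and `ω r² = (p+1) r + φ`.
By the strong law `φ_M / M → ξλ`, while `p_M / M → -ξ`, and both roots then tend to `λ`.
-/

open MeasureTheory ProbabilityTheory Filter

open Real Set Topology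

noncomputable def posRoot (ω a b : ℝ) : ℝ := (a + √(a ^ 2 + 4 * ω * b)) / (2 * ω)

lemma posRoot_le_of_mul_add_le {ω a b r : ℝ} (hω : 0 < ω) (hr : 0 < r) (hb : 0 ≤ b)
    (h : a * r + b ≤ ω * r ^ 2) : posRoot ω a b ≤ r := by
  have har : a ≤ ω * r := le_of_mul_le_mul_right (by nlinarith) hr
  have hpos : 0 < 2 * ω * r - a := by nlinarith [mul_pos hω hr]
  have hsqrt : √(a ^ 2 + 4 * ω * b) ≤ 2 * ω * r - a :=
    sqrt_le_iff.mpr ⟨hpos.le, by nlinarith⟩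
  rw [posRoot, div_le_iff₀ (by positivity)]
  linarith

lemma le_posRoot_of_le_mul_add {ω a b r : ℝ} (hω : 0 < ω) (h : ω * r ^ 2 ≤ a * r + b) :
    r ≤ posRoot ω a b := by
  have hsqrt : 2 * ω * r - a ≤ √(a ^ 2 + 4 * ω * b) := by
    rcases le_or_gt (2 * ω * r - a) 0 with hneg | hpos
    · exact hneg.trans (sqrt_nonneg _)
    · exact le_sqrt_of_sq_le (by nlinarith)
  rw [posRoot, le_div_iff₀ (by positivity)]
  linarith

lemma eventually_pos_of_tendsto_div {f : ℕ → ℝ} {c : ℝ} (hc : 0 < c)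
    (h : Tendsto (fun n => f n / n) atTop (𝓝 c)) : ∀ᶠ n in atTop, 0 < f n := by
  filter_upwards [h.eventually (eventually_gt_nhds hc)] with n hn
  rcases div_pos_iff.mp hn with ⟨hf, -⟩ | ⟨-, hn⟩
  · exact hf
  · exact absurd hn (Nat.cast_nonneg n).not_gt

lemma tendsto_posRoot {ω α β : ℝ} {a b : ℕ → ℝ} (hω : 0 < ω) (hα : 0 < α)
    (ha : Tendsto (fun n => a n / n) atTop (𝓝 (-α)))
    (hb : Tendsto (fun n => b n / n) atTop (𝓝 β)) :
    Tendsto (fun n => posRoot ω (a n) (b n)) atTop (𝓝 (β / α)) := by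
  set D : ℕ → ℝ := fun n => (a n / n) ^ 2 + 4 * ω * (b n / n) * (1 / n)
  have hD : Tendsto D atTop (𝓝 (α ^ 2)) := by
    simpa [D, neg_sq] using (ha.pow 2).add ((hb.const_mul (4 * ω)).mul
      tendsto_one_div_atTop_nhds_zero_nat)
  -- rationalizing: `posRoot ω a b = 2 b / (√(a² + 4ωb) - a)`, a form whose limit is visible
  have hlim : Tendsto (fun n => 2 * (b n / n) / (√(D n) - a n / n)) atTop (𝓝 (β / α)) := by
    have hden : Tendsto (fun n => √(D n) - a n / n) atTop (𝓝 (α - -α)) := by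
      simpa [sqrt_sq hα.le] using hD.sqrt.sub ha
    have := (hb.const_mul 2).div hden (by linarith)
    rwa [show 2 * β / (α - -α) = β / α by field_simp; ring] at this
  refine hlim.congr' ?_
  filter_upwards [hD.eventually (eventually_gt_nhds (by positivity)),
    eventually_pos_of_tendsto_div (f := fun n => -a n) hα (by simpa [neg_div] using ha.neg),
    eventually_gt_atTop 0] with n hDn han hn
  have hn' : (0 : ℝ) < n := Nat.cast_pos.mpr hn
  have hDeq : D n = (a n ^ 2 + 4 * ω * b n) / (n : ℝ) ^ 2 := by
    simp only [D]; field_simp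
  have hDnn : 0 ≤ a n ^ 2 + 4 * ω * b n := by
    rw [hDeq] at hDn
    exact ((div_pos_iff_of_pos_right (by positivity)).mp hDn).le
  have hsq := sq_sqrt hDnn
  have hden : 0 < √(a n ^ 2 + 4 * ω * b n) - a n := by
    linarith [sqrt_nonneg (a n ^ 2 + 4 * ω * b n)]
  rw [hDeq, sqrt_div' _ (by positivity), sqrt_sq hn'.le, div_sub_div_same, ← mul_div_assoc,
    div_div_div_cancel_right₀ hn'.ne', posRoot, div_eq_div_iff hden.ne' (by positivity)]
  linear_combination -hsq

lemma tendsto_sub_mul_div_natCast (c ξ : ℝ) :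
    Tendsto (fun n : ℕ => (c - n * ξ) / n) atTop (𝓝 (-ξ)) := by
  have := (tendsto_one_div_atTop_nhds_zero_nat.const_mul c).sub_const ξ
  rw [mul_zero, zero_sub] at this
  refine this.congr' ?_
  filter_upwards [eventually_gt_atTop 0] with n hn
  field_simp

lemma integral_id_gammaMeasure {a r : ℝ} (ha : 0 < a) (hr : 0 < r) :
    ∫ x, x ∂gammaMeasure a r = a / r := by
  rw [gammaMeasure, integral_withDensity_eq_integral_toReal_smul
    (show Measurable (gammaPDF a r) from (measurable_gammaPDFReal a r).ennreal_ofReal)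
    (ae_of_all _ fun _ => ENNReal.ofReal_lt_top),
    ← setIntegral_eq_integral_of_forall_compl_eq_zero (s := Ioi 0) fun x hx => by
      rcases (not_lt.mp (show ¬0 < x from hx)).lt_or_eq with hneg | rfl
      · simp [gammaPDF, gammaPDFReal, not_le.mpr hneg]
      · simp]
  calc ∫ x in Ioi 0, (gammaPDF a r x).toReal • x
      = ∫ x in Ioi 0, r ^ a / Gamma a * (x ^ (a + 1 - 1) * exp (-(r * x))) := by
        refine setIntegral_congr_fun measurableSet_Ioi fun x (hx : 0 < x) => ?_
        rw [gammaPDF, ENNReal.toReal_ofReal (gammaPDFReal_nonneg ha hr x), gammaPDFReal,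
          if_pos hx.le, smul_eq_mul, add_sub_cancel_right, rpow_sub_one hx.ne']
        field_simp
    _ = a / r := by
        rw [integral_const_mul, integral_rpow_mul_exp_neg_mul_Ioi (by linarith) hr,
          rpow_add_one (by positivity), Gamma_add_one ha.ne', one_div, inv_rpow hr.le]
        field_simp

lemma ae_tendsto_avg_of_iIndepFun {Ω : Type*} [MeasurableSpace Ω] {μ : Measure Ω}
    {θ : ℕ → Ω → ℝ} {ν : Measure ℝ} (hmeas : ∀ m, Measurable (θ m)) (hindep : iIndepFun θ μ)
    (hdist : ∀ m, μ.map (θ m) = ν) (hν : Integrable id ν) :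
    ∀ᵐ x ∂μ, Tendsto (fun M : ℕ => (∑ m ∈ Finset.range M, θ m x) / M) atTop
      (𝓝 (∫ y, y ∂ν)) := by
  have hident : ∀ m, IdentDistrib (θ m) (θ 0) μ μ := fun m =>
    ⟨(hmeas m).aemeasurable, (hmeas 0).aemeasurable, by rw [hdist m, hdist 0]⟩
  have hmean : ∫ x, θ 0 x ∂μ = ∫ y, y ∂ν := by
    rw [← hdist 0]
    exact (integral_map (hmeas 0).aemeasurable aestronglyMeasurable_id).symm
  rw [← hmean]
  refine strong_law_ae_real θ ?_ (fun i j hij => hindep.indepFun hij) hident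
  rw [← hdist 0] at hν
  exact (integrable_map_measure aestronglyMeasurable_id (hmeas 0).aemeasurable).mp hν

noncomputable def gigIntegrand (ω φ p x : ℝ) : ℝ := x ^ (p - 1) * exp (-(ω * x) - φ / x)

noncomputable def gigIntegral (ω φ p : ℝ) : ℝ := ∫ x in Ioi 0, gigIntegrand ω φ p x

noncomputable def gigRatio (ω φ p : ℝ) : ℝ := gigIntegral ω φ (p + 1) / gigIntegral ω φ p

section Gig

variable {ω φ : ℝ}

lemma gigIntegrand_pos (ω φ p : ℝ) {x : ℝ} (hx : 0 < x) : 0 < gigIntegrand ω φ p x := by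
  unfold gigIntegrand; positivity

lemma gigIntegrand_add (ω φ p s : ℝ) {x : ℝ} (hx : 0 < x) :
    gigIntegrand ω φ (p + s) x = x ^ s * gigIntegrand ω φ p x := by
  rw [gigIntegrand, gigIntegrand, add_sub_right_comm, rpow_add hx]
  ring

lemma gigIntegrand_sub_one (ω φ p : ℝ) {x : ℝ} (hx : 0 < x) :
    gigIntegrand ω φ (p - 1) x = x⁻¹ * gigIntegrand ω φ p x := by
  rw [sub_eq_add_neg, gigIntegrand_add ω φ p (-1) hx, rpow_neg_one]

lemma gigIntegrand_add_one (ω φ p : ℝ) {x : ℝ} (hx : 0 < x) :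
    gigIntegrand ω φ (p + 1) x = x * gigIntegrand ω φ p x := by
  rw [gigIntegrand_add ω φ p 1 hx, rpow_one]

lemma continuousOn_gigIntegrand (ω φ p : ℝ) : ContinuousOn (gigIntegrand ω φ p) (Ioi 0) := by
  intro x (hx : 0 < x)
  unfold gigIntegrand
  exact ((continuousAt_id.rpow_const (Or.inl hx.ne')).mul
    ((continuousAt_const.mul continuousAt_id).neg.sub
      (continuousAt_const.div continuousAt_id hx.ne')).rexp).continuousWithinAt

lemma gigIntegrand_le (hφ : 0 < φ) (p : ℝ) (N : ℕ) {x : ℝ} (hx : 0 < x) :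
    gigIntegrand ω φ p x ≤ N.factorial / φ ^ N * (x ^ (p - 1 + N) * exp (-ω * x)) := by
  have hexp : exp (-(φ / x)) ≤ N.factorial * x ^ N / φ ^ N :=
    calc exp (-(φ / x)) = (exp (φ / x))⁻¹ := exp_neg _
      _ ≤ ((φ / x) ^ N / N.factorial)⁻¹ :=
        inv_anti₀ (by positivity) (pow_div_factorial_le_exp _ (by positivity) N)
      _ = N.factorial * x ^ N / φ ^ N := by rw [div_pow]; field_simp
  calc gigIntegrand ω φ p x = x ^ (p - 1) * exp (-ω * x) * exp (-(φ / x)) := by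
        rw [gigIntegrand, mul_assoc, ← exp_add]; ring_nf
    _ ≤ x ^ (p - 1) * exp (-ω * x) * (N.factorial * x ^ N / φ ^ N) := by gcongr
    _ = N.factorial / φ ^ N * (x ^ (p - 1 + N) * exp (-ω * x)) := by
        rw [rpow_add hx, rpow_natCast]; ring

lemma integrableOn_gigIntegrand (hω : 0 < ω) (hφ : 0 < φ) (p : ℝ) :
    IntegrableOn (gigIntegrand ω φ p) (Ioi 0) := by
  set N := ⌊-p⌋₊ + 1
  have hN : -1 < p - 1 + N := by
    have := Nat.lt_floor_add_one (-p); push_cast [N]; linarith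
  have hbound : IntegrableOn (fun x => x ^ (p - 1 + N) * exp (-ω * x)) (Ioi 0) := by
    simpa using integrableOn_rpow_mul_exp_neg_mul_rpow hN zero_lt_one hω
  refine (hbound.const_mul (N.factorial / φ ^ N)).mono'
    ((continuousOn_gigIntegrand ω φ p).aestronglyMeasurable measurableSet_Ioi) ?_
  filter_upwards [self_mem_ae_restrict measurableSet_Ioi] with x (hx : 0 < x)
  rw [norm_of_nonneg (gigIntegrand_pos ω φ p hx).le]
  exact gigIntegrand_le hφ p N hx

lemma gigIntegral_pos (hω : 0 < ω) (hφ : 0 < φ) (p : ℝ) : 0 < gigIntegral ω φ p := by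
  rw [gigIntegral, setIntegral_pos_iff_support_of_nonneg_ae
    (ae_restrict_of_forall_mem measurableSet_Ioi fun x hx => (gigIntegrand_pos ω φ p hx).le)
    (integrableOn_gigIntegrand hω hφ p)]
  refine lt_of_lt_of_le ?_ (measure_mono (s := Ioi 0) fun x hx =>
    ⟨(gigIntegrand_pos ω φ p hx).ne', hx⟩)
  simp

lemma tendsto_gigIntegrand_atTop (hω : 0 < ω) (hφ : 0 < φ) (p : ℝ) :
    Tendsto (gigIntegrand ω φ p) atTop (𝓝 0) := by
  refine tendsto_of_tendsto_of_tendsto_of_le_of_le' tendsto_const_nhds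
    (tendsto_rpow_mul_exp_neg_mul_atTop_nhds_zero (p - 1) ω hω) ?_ ?_
  all_goals filter_upwards [eventually_gt_atTop 0] with x hx
  · exact (gigIntegrand_pos ω φ p hx).le
  · rw [gigIntegrand, neg_mul]
    gcongr
    linarith [div_pos hφ hx]

lemma tendsto_gigIntegrand_nhdsGT_zero (hω : 0 < ω) (hφ : 0 < φ) (p : ℝ) :
    Tendsto (gigIntegrand ω φ p) (𝓝[>] 0) (𝓝 0) := by
  have hinv := (tendsto_rpow_mul_exp_neg_mul_atTop_nhds_zero (1 - p) φ hφ).comp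
    tendsto_inv_nhdsGT_zero
  refine tendsto_of_tendsto_of_tendsto_of_le_of_le' tendsto_const_nhds hinv ?_ ?_
  all_goals filter_upwards [self_mem_nhdsWithin] with x (hx : 0 < x)
  · exact (gigIntegrand_pos ω φ p hx).le
  · rw [Function.comp_apply, gigIntegrand, inv_rpow hx.le, ← rpow_neg hx.le, neg_sub,
      ← div_eq_mul_inv]
    gcongr
    linarith [mul_pos hω hx, neg_div x φ]

lemma setIntegral_gigIntegrand_linear_comb (hω : 0 < ω) (hφ : 0 < φ) (p a b c : ℝ) :
    ∫ x in Ioi 0, (a * gigIntegrand ω φ (p - 1) x + b * gigIntegrand ω φ p x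
      + c * gigIntegrand ω φ (p + 1) x)
      = a * gigIntegral ω φ (p - 1) + b * gigIntegral ω φ p + c * gigIntegral ω φ (p + 1) := by
  have hint := integrableOn_gigIntegrand hω hφ
  rw [integral_add ?_ ((hint _).const_mul c),
    integral_add ((hint _).const_mul a) ((hint _).const_mul b),
    integral_const_mul, integral_const_mul, integral_const_mul, gigIntegral, gigIntegral,
    gigIntegral]
  exact ((hint _).const_mul a).add ((hint _).const_mul b)

lemma gigIntegral_recurrence (hω : 0 < ω) (hφ : 0 < φ) (p : ℝ) :
    ω * gigIntegral ω φ (p + 1) = p * gigIntegral ω φ p + φ * gigIntegral ω φ (p - 1) := by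
  set E : ℝ → ℝ := fun x => exp (-(ω * x) - φ / x)
  have hu : ∀ x ∈ Ioi (0 : ℝ), HasDerivAt (fun x => x ^ p) (p * x ^ (p - 1)) x :=
    fun x hx => hasDerivAt_rpow_const (Or.inl (ne_of_gt hx))
  have hv : ∀ x ∈ Ioi (0 : ℝ), HasDerivAt E (E x * (-ω + φ / x ^ 2)) x := by
    intro x (hx : 0 < x)
    have hlin : HasDerivAt (fun y => ω * y) ω x := by
      simpa using (hasDerivAt_id x).const_mul ω
    have hinv : HasDerivAt (fun y => φ / y) (φ * -(x ^ 2)⁻¹) x := by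
      simpa [div_eq_mul_inv] using (hasDerivAt_inv hx.ne').const_mul φ
    exact ((hlin.neg.sub hinv).congr_deriv (by ring)).exp
  have huv : (fun x => x ^ p) * E = gigIntegrand ω φ (p + 1) := by
    ext x; simp [E, gigIntegrand]
  have hcomb : EqOn (fun x => p * x ^ (p - 1) * E x + x ^ p * (E x * (-ω + φ / x ^ 2)))
      (fun x => φ * gigIntegrand ω φ (p - 1) x + p * gigIntegrand ω φ p x
        + (-ω) * gigIntegrand ω φ (p + 1) x) (Ioi 0) := by
    intro x (hx : 0 < x)
    dsimp only
    rw [gigIntegrand_sub_one ω φ p hx, gigIntegrand_add_one ω φ p hx]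
    simp only [gigIntegrand, E, rpow_sub_one hx.ne']
    field_simp
    ring
  have hint := integrableOn_gigIntegrand hω hφ
  have hibp := integral_Ioi_deriv_mul_eq_sub hu hv
    (IntegrableOn.congr_fun ((((hint _).const_mul φ).add ((hint _).const_mul p)).add
      ((hint _).const_mul (-ω))) hcomb.symm measurableSet_Ioi)
    (huv ▸ tendsto_gigIntegrand_nhdsGT_zero hω hφ _) (huv ▸ tendsto_gigIntegrand_atTop hω hφ _)
  rw [setIntegral_congr_fun measurableSet_Ioi hcomb,
    setIntegral_gigIntegrand_linear_comb hω hφ, sub_zero] at hibp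
  linarith

lemma gigIntegral_sq_le (hω : 0 < ω) (hφ : 0 < φ) (p : ℝ) :
    gigIntegral ω φ p ^ 2 ≤ gigIntegral ω φ (p - 1) * gigIntegral ω φ (p + 1) := by
  set t := gigIntegral ω φ p / gigIntegral ω φ (p + 1)
  have hC := gigIntegral_pos hω hφ (p + 1)
  have hsq : 0 ≤ ∫ x in Ioi 0, (1 * gigIntegrand ω φ (p - 1) x
      + (-2 * t) * gigIntegrand ω φ p x + t ^ 2 * gigIntegrand ω φ (p + 1) x) := by
    refine setIntegral_nonneg measurableSet_Ioi fun x (hx : 0 < x) => ?_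
    rw [gigIntegrand_sub_one ω φ p hx, gigIntegrand_add_one ω φ p hx]
    have := gigIntegrand_pos ω φ p hx
    have hsq : 0 ≤ (1 - t * x) ^ 2 / x * gigIntegrand ω φ p x := by positivity
    convert hsq using 1
    field_simp
    ring
  rw [setIntegral_gigIntegrand_linear_comb hω hφ] at hsq
  have key : gigIntegral ω φ (p - 1) * gigIntegral ω φ (p + 1) - gigIntegral ω φ p ^ 2
      = gigIntegral ω φ (p + 1) * (1 * gigIntegral ω φ (p - 1) + -2 * t * gigIntegral ω φ p
        + t ^ 2 * gigIntegral ω φ (p + 1)) := by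
    simp only [t]; field_simp; ring
  nlinarith [mul_nonneg hC.le hsq]

lemma gigRatio_pos (hω : 0 < ω) (hφ : 0 < φ) (p : ℝ) : 0 < gigRatio ω φ p :=
  div_pos (gigIntegral_pos hω hφ _) (gigIntegral_pos hω hφ _)

lemma gigRatio_recurrence (hω : 0 < ω) (hφ : 0 < φ) (p : ℝ) :
    ω * gigRatio ω φ p = p + φ / gigRatio ω φ (p - 1) := by
  have hB := gigIntegral_pos hω hφ p
  have hA := gigIntegral_pos hω hφ (p - 1)
  rw [gigRatio, gigRatio, sub_add_cancel]
  field_simp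
  linear_combination gigIntegral_recurrence hω hφ p

lemma gigRatio_sub_one_le (hω : 0 < ω) (hφ : 0 < φ) (p : ℝ) :
    gigRatio ω φ (p - 1) ≤ gigRatio ω φ p := by
  rw [gigRatio, gigRatio, sub_add_cancel,
    div_le_div_iff₀ (gigIntegral_pos hω hφ _) (gigIntegral_pos hω hφ _)]
  nlinarith [gigIntegral_sq_le hω hφ p]

lemma posRoot_le_gigRatio (hω : 0 < ω) (hφ : 0 < φ) (p : ℝ) :
    posRoot ω p φ ≤ gigRatio ω φ p := by
  have hr := gigRatio_pos hω hφ p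
  have hle : φ / gigRatio ω φ p ≤ φ / gigRatio ω φ (p - 1) :=
    div_le_div_of_nonneg_left hφ.le (gigRatio_pos hω hφ _) (gigRatio_sub_one_le hω hφ p)
  refine posRoot_le_of_mul_add_le hω hr hφ.le ?_
  calc p * gigRatio ω φ p + φ = (p + φ / gigRatio ω φ p) * gigRatio ω φ p := by field_simp
    _ ≤ (p + φ / gigRatio ω φ (p - 1)) * gigRatio ω φ p := by gcongr
    _ = ω * gigRatio ω φ p ^ 2 := by rw [← gigRatio_recurrence hω hφ p]; ring

lemma gigRatio_le_posRoot (hω : 0 < ω) (hφ : 0 < φ) (p : ℝ) :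
    gigRatio ω φ p ≤ posRoot ω (p + 1) φ := by
  have hr := gigRatio_pos hω hφ p
  have hrec := gigRatio_recurrence hω hφ (p + 1)
  have hmono := gigRatio_sub_one_le hω hφ (p + 1)
  rw [add_sub_cancel_right] at hrec hmono
  refine le_posRoot_of_le_mul_add hω ?_
  calc ω * gigRatio ω φ p ^ 2 = ω * gigRatio ω φ p * gigRatio ω φ p := by ring
    _ ≤ ω * gigRatio ω φ (p + 1) * gigRatio ω φ p := by gcongr
    _ = (p + 1) * gigRatio ω φ p + φ := by rw [hrec]; field_simp

lemma besselK_two_mul_sqrt_mul (hω : 0 < ω) (hφ : 0 < φ) (q : ℝ) :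
    besselK q (2 * √(ω * φ)) = √(ω / φ) ^ q / 2 * gigIntegral ω φ q := by
  set c := √(ω / φ)
  have hc : 0 < c := sqrt_pos.mpr (div_pos hω hφ)
  have hc2 : φ * c ^ 2 = ω := by rw [sq_sqrt (div_pos hω hφ).le]; field_simp
  have hs : √(ω * φ) = φ * c := by
    rw [show ω * φ = φ ^ 2 * (ω / φ) by field_simp, sqrt_mul (sq_nonneg φ), sqrt_sq hφ.le]
  have hsub : ∀ x ∈ Ioi (0 : ℝ),
      (c * x) ^ (q - 1) * exp (-(2 * √(ω * φ) * (c * x + 1 / (c * x))) / 2)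
        = c ^ (q - 1) * gigIntegrand ω φ q x := by
    intro x (hx : 0 < x)
    rw [mul_rpow hc.le hx.le, gigIntegrand, hs, ← hc2]
    field_simp
    ring_nf
  have hchange := integral_comp_mul_left_Ioi'
    (fun u => u ^ (q - 1) * exp (-(2 * √(ω * φ) * (u + 1 / u)) / 2)) 0 hc
  rw [mul_zero] at hchange
  rw [besselK, gigIntegral, ← hchange, setIntegral_congr_fun measurableSet_Ioi hsub,
    integral_const_mul, smul_eq_mul, rpow_sub_one hc.ne']
  field_simp

lemma sqrt_div_mul_besselR_s7 (hω : 0 < ω) (hφ : 0 < φ) (q : ℝ) :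
    √(φ / ω) * besselR q (2 * √(ω * φ)) = gigRatio ω φ q := by
  set c := √(ω / φ)
  have hc : 0 < c := sqrt_pos.mpr (div_pos hω hφ)
  have hinv : √(φ / ω) * c = 1 := by
    rw [← sqrt_mul (div_pos hφ hω).le, show φ / ω * (ω / φ) = 1 by field_simp, sqrt_one]
  have hI := gigIntegral_pos hω hφ q
  rw [besselR, besselK_two_mul_sqrt_mul hω hφ, besselK_two_mul_sqrt_mul hω hφ, gigRatio,
    rpow_add_one hc.ne']
  calc √(φ / ω) * (c ^ q * c / 2 * gigIntegral ω φ (q + 1) / (c ^ q / 2 * gigIntegral ω φ q))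
      = (√(φ / ω) * c) * (gigIntegral ω φ (q + 1) / gigIntegral ω φ q) := by
        field_simp
    _ = gigIntegral ω φ (q + 1) / gigIntegral ω φ q := by rw [hinv, one_mul]

end Gig

theorem posterior_mean_tendsto_of_many_experts_general
    {Ω : Type*} [MeasurableSpace Ω] (μ : Measure Ω)
    (lam ξ α₀ β₀ V : ℝ) (hlam : 0 < lam) (hξ : 0 < ξ) (hβ₀ : 0 < β₀)
    (hV : 0 < V) (K : ℕ)
    (s ω : ℝ) (hω : ω = V * K + 1 / β₀)
    (θ : ℕ → Ω → ℝ) (hmeas : ∀ m, Measurable (θ m))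
    (hindep : iIndepFun θ μ)
    (hdist : ∀ m, μ.map (θ m) = gammaMeasure ξ (ξ / lam)) :
    ∀ᵐ x ∂μ, Tendsto (fun M : ℕ =>
        Real.sqrt ((ξ * ∑ m ∈ Finset.range M, θ m x) / ω) *
          besselR ((α₀ - 1 - M * ξ + s) + 1)
            (2 * Real.sqrt (ω * (ξ * ∑ m ∈ Finset.range M, θ m x))))
      atTop (nhds lam) := by
  have hω0 : 0 < ω := by rw [hω]; positivity
  have hmean : ∫ y, y ∂gammaMeasure ξ (ξ / lam) = lam := by
    rw [integral_id_gammaMeasure hξ (by positivity)]; field_simp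
  have hint : Integrable id (gammaMeasure ξ (ξ / lam)) :=
    Integrable.of_integral_ne_zero (by rw [← hmean] at hlam; exact hlam.ne')
  filter_upwards [ae_tendsto_avg_of_iIndepFun hmeas hindep hdist hint] with x hx
  set φ : ℕ → ℝ := fun M => ξ * ∑ m ∈ Finset.range M, θ m x
  have hφ : Tendsto (fun M : ℕ => φ M / M) atTop (𝓝 (ξ * lam)) := by
    simpa only [φ, mul_div_assoc, hmean] using hx.const_mul ξ
  have hq : Tendsto (fun M : ℕ => ((α₀ - 1 - M * ξ + s) + 1) / M) atTop (𝓝 (-ξ)) := by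
    convert tendsto_sub_mul_div_natCast (α₀ + s) ξ using 3; ring
  have hq' : Tendsto (fun M : ℕ => ((α₀ - 1 - M * ξ + s) + 1 + 1) / M) atTop (𝓝 (-ξ)) := by
    convert tendsto_sub_mul_div_natCast (α₀ + s + 1) ξ using 3; ring
  have hlim : ξ * lam / ξ = lam := by field_simp
  refine tendsto_of_tendsto_of_tendsto_of_le_of_le' (hlim ▸ tendsto_posRoot hω0 hξ hq hφ)
    (hlim ▸ tendsto_posRoot hω0 hξ hq' hφ) ?_ ?_
  all_goals filter_upwards [eventually_pos_of_tendsto_div (by positivity) hφ] with M hM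
  · exact sqrt_div_mul_besselR_s7 hω0 hM _ ▸ posRoot_le_gigRatio hω0 hM _
  · exact sqrt_div_mul_besselR_s7 hω0 hM _ ▸ gigRatio_le_posRoot hω0 hM _

/-- **Theorem 2c: consistency as the number of experts grows.**
If the expert opinions are i.i.d. Gamma with shape `ξ` and scale `λ/ξ` (i.e. rate `ξ/λ`),
then almost surely the posterior mean `√(φ_M/ω) R_{ν_M+1}(2√(ω φ_M))` of the Poisson
intensity converges to `λ` as `M → ∞`. -/
theorem posterior_mean_tendsto_of_many_experts
    {Ω : Type*} [MeasurableSpace Ω] (μ : Measure Ω) [IsProbabilityMeasure μ]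
    (lam ξ α₀ β₀ V : ℝ) (hlam : 0 < lam) (hξ : 0 < ξ) (hα₀ : 0 < α₀) (hβ₀ : 0 < β₀)
    (hV : 0 < V) (K : ℕ) (n : Fin K → ℕ)
    (s ω : ℝ) (hs : s = ∑ k, (n k : ℝ)) (hω : ω = V * K + 1 / β₀)
    (θ : ℕ → Ω → ℝ) (hmeas : ∀ m, Measurable (θ m))
    (hindep : iIndepFun θ μ)
    (hdist : ∀ m, μ.map (θ m) = gammaMeasure ξ (ξ / lam)) :
    ∀ᵐ x ∂μ, Tendsto (fun M : ℕ =>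
        Real.sqrt ((ξ * ∑ m ∈ Finset.range M, θ m x) / ω) *
          besselR ((α₀ - 1 - M * ξ + s) + 1)
            (2 * Real.sqrt (ω * (ξ * ∑ m ∈ Finset.range M, θ m x))))
      atTop (nhds lam) :=
  posterior_mean_tendsto_of_many_experts_general μ lam ξ α₀ β₀ V hlam hξ hβ₀ hV K s ω hω θ hmeas
    hindep hdist
end

section
/- Fix α₀ > 0, β₀ > 0, V > 0, integers K ≥ 1 and M ≥ 1, counts n₁,…,n_K ∈ ℕ with s = Σ_{k=1}^K n_k, a value θ̄ > 0, and set ω = VK + 1/β₀. Then lim_{ξ→0⁺} √(ξMθ̄/ω) · R_{α₀ − Mξ + s}(2√(ω ξ M θ̄)) = (α₀ + s)β₀/(VKβ₀ + 1), and this limit equals the credibility mixture (1/(VKβ₀+1))·α₀β₀ + (1 − 1/(VKβ₀+1))·(s/K)/V of the prior mean α₀β₀ and the maximum likelihood estimate (s/K)/V. -/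
open MeasureTheory ProbabilityTheory Filter

/-!
The substitution `u = x / √ε` turns the Bessel integral into a perturbed Gamma integral:
`K_ν(2√ε) = ½ ε^(-ν/2) ∫₀^∞ x^(ν-1) e^(-x - ε/x) dx`. Hence, with `ε = ωφ`, the posterior mean
`√(φ/ω) R_ν(2√(ωφ))` is `ω⁻¹` times the ratio of two such integrals of orders `ν` and `ν - 1`.
As `ξ → 0⁺` both `ε → 0` and `ν → α₀ + s`, and by dominated convergence (the integrand is bounded
by `(x^c + x^d) e^(-x)` for exponents `c ≤ ν ≤ d`) the ratio tends to
`Γ(α₀ + s + 1) / Γ(α₀ + s) = α₀ + s`.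
-/

open Real Set Topology

noncomputable def perturbedGammaIntegral (p ε : ℝ) : ℝ :=
  ∫ x in Ioi (0 : ℝ), x ^ p * exp (-x - ε / x)

lemma rpow_le_rpow_add_rpow {x c p d : ℝ} (hx : 0 < x) (hcp : c ≤ p) (hpd : p ≤ d) :
    x ^ p ≤ x ^ c + x ^ d := by
  rcases le_total x 1 with h | h
  · linarith [rpow_le_rpow_of_exponent_ge hx h hcp, rpow_nonneg hx.le d]
  · linarith [rpow_le_rpow_of_exponent_le h hpd, rpow_nonneg hx.le c]

lemma integrableOn_rpow_mul_exp_neg {p : ℝ} (hp : -1 < p) :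
    IntegrableOn (fun x : ℝ => x ^ p * exp (-x)) (Ioi 0) := by
  simpa only [rpow_one] using integrableOn_rpow_mul_exp_neg_rpow hp one_pos

lemma integral_rpow_mul_exp_neg {p : ℝ} (hp : -1 < p) :
    ∫ x in Ioi (0 : ℝ), x ^ p * exp (-x) = Gamma (p + 1) := by
  simpa only [rpow_one, div_one, one_mul] using integral_rpow_mul_exp_neg_rpow one_pos hp

lemma continuousOn_perturbedGammaIntegrand (p ε : ℝ) :
    ContinuousOn (fun x : ℝ => x ^ p * exp (-x - ε / x)) (Ioi 0) := by
  intro x (hx : 0 < x)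
  apply ContinuousAt.continuousWithinAt
  fun_prop (disch := simp [hx.ne'])

lemma rpow_mul_exp_neg_sub_div_le {x p ε : ℝ} (hx : 0 < x) (hε : 0 ≤ ε) :
    x ^ p * exp (-x - ε / x) ≤ x ^ p * exp (-x) := by
  have := div_nonneg hε hx.le
  exact mul_le_mul_of_nonneg_left (exp_le_exp.mpr (by linarith)) (rpow_nonneg hx.le p)

lemma besselK_two_mul_sqrt (ν : ℝ) {ε : ℝ} (hε : 0 < ε) :
    besselK ν (2 * sqrt ε) = (1 / 2) * (sqrt ε)⁻¹ ^ ν * perturbedGammaIntegral (ν - 1) ε := by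
  have hs : 0 < sqrt ε := sqrt_pos.mpr hε
  have hb : 0 < (sqrt ε)⁻¹ := inv_pos.mpr hs
  have hintegrand : ∀ x ∈ Ioi (0 : ℝ),
      ((sqrt ε)⁻¹ * x) ^ (ν - 1) *
          exp (-(2 * sqrt ε * ((sqrt ε)⁻¹ * x + 1 / ((sqrt ε)⁻¹ * x))) / 2) =
        (sqrt ε)⁻¹ ^ (ν - 1) * (x ^ (ν - 1) * exp (-x - ε / x)) := by
    intro x (hx : 0 < x)
    have hexp : -(2 * sqrt ε * ((sqrt ε)⁻¹ * x + 1 / ((sqrt ε)⁻¹ * x))) / 2 = -x - ε / x := by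
      field_simp
      rw [sq_sqrt hε.le]
      ring
    rw [mul_rpow hb.le hx.le, hexp, mul_assoc]
  have hsub := integral_comp_mul_left_Ioi
    (fun u : ℝ => u ^ (ν - 1) * exp (-(2 * sqrt ε * (u + 1 / u)) / 2)) 0 hb
  rw [mul_zero, inv_inv, smul_eq_mul, setIntegral_congr_fun measurableSet_Ioi hintegrand,
    integral_const_mul] at hsub
  rw [besselK, perturbedGammaIntegral, (eq_inv_mul_iff_mul_eq₀ hs.ne').mpr hsub.symm,
    ← sub_add_cancel ν 1, rpow_add_one hb.ne', add_sub_cancel_right]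
  ring

lemma besselR_two_mul_sqrt (ν : ℝ) {ε : ℝ} (hε : 0 < ε) :
    besselR ν (2 * sqrt ε) =
      (sqrt ε)⁻¹ * (perturbedGammaIntegral ν ε / perturbedGammaIntegral (ν - 1) ε) := by
  have hb : 0 < (sqrt ε)⁻¹ := inv_pos.mpr (sqrt_pos.mpr hε)
  have hbν : (1 / 2) * (sqrt ε)⁻¹ ^ ν ≠ 0 := by positivity
  rw [besselR, besselK_two_mul_sqrt _ hε, besselK_two_mul_sqrt _ hε, add_sub_cancel_right,
    rpow_add_one hb.ne', mul_assoc (1 / 2), mul_assoc, ← mul_assoc (1 / 2),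
    mul_div_mul_left _ _ hbν, mul_div_assoc]

lemma sqrt_div_mul_besselR_two_mul_sqrt_mul (ν : ℝ) {ω φ : ℝ} (hω : 0 < ω) (hφ : 0 < φ) :
    sqrt (φ / ω) * besselR ν (2 * sqrt (ω * φ)) =
      ω⁻¹ * (perturbedGammaIntegral ν (ω * φ) / perturbedGammaIntegral (ν - 1) (ω * φ)) := by
  have hscale : sqrt (φ / ω) * (sqrt (ω * φ))⁻¹ = ω⁻¹ := by
    rw [← div_eq_mul_inv, ← sqrt_div' _ (by positivity),
      show φ / ω / (ω * φ) = ω⁻¹ ^ 2 by field_simp, sqrt_sq (by positivity)]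
  rw [besselR_two_mul_sqrt _ (by positivity), ← mul_assoc, hscale]

section Limits

variable {α : Type*} {l : Filter α} [l.IsCountablyGenerated] {p ε : α → ℝ} {p₀ : ℝ}

lemma tendsto_perturbedGammaIntegral (hp₀ : -1 < p₀) (hp : Tendsto p l (𝓝 p₀))
    (hε : Tendsto ε l (𝓝 0)) (hε_nonneg : ∀ᶠ i in l, 0 ≤ ε i) :
    Tendsto (fun i => perturbedGammaIntegral (p i) (ε i)) l (𝓝 (Gamma (p₀ + 1))) := by
  obtain ⟨c, hc, hcp₀⟩ := exists_between hp₀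
  have hp_mem : ∀ᶠ i in l, p i ∈ Icc c (p₀ + 1) :=
    hp.eventually (Icc_mem_nhds hcp₀ (lt_add_one p₀))
  rw [← integral_rpow_mul_exp_neg hp₀]
  refine tendsto_integral_filter_of_dominated_convergence
    (fun x => x ^ c * exp (-x) + x ^ (p₀ + 1) * exp (-x))
    (.of_forall fun i =>
      (continuousOn_perturbedGammaIntegrand _ _).aestronglyMeasurable measurableSet_Ioi)
    ?_ ((integrableOn_rpow_mul_exp_neg hc).add (integrableOn_rpow_mul_exp_neg (by linarith))) ?_
  · filter_upwards [hp_mem, hε_nonneg] with i ⟨hci, hid⟩ hεi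
    filter_upwards [ae_restrict_mem measurableSet_Ioi] with x (hx : 0 < x)
    rw [norm_of_nonneg (by positivity), ← add_mul]
    exact (rpow_mul_exp_neg_sub_div_le hx hεi).trans
      (mul_le_mul_of_nonneg_right (rpow_le_rpow_add_rpow hx hci hid) (exp_nonneg _))
  · filter_upwards [ae_restrict_mem measurableSet_Ioi] with x (hx : 0 < x)
    have hexp : Tendsto (fun i => exp (-x - ε i / x)) l (𝓝 (exp (-x - 0 / x))) :=
      ((hε.div_const x).const_sub (-x)).rexp
    rw [zero_div, sub_zero] at hexp
    exact (tendsto_const_nhds.rpow hp (Or.inl hx.ne')).mul hexp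

lemma tendsto_perturbedGammaIntegral_div (hp₀ : 0 < p₀) (hp : Tendsto p l (𝓝 p₀))
    (hε : Tendsto ε l (𝓝 0)) (hε_nonneg : ∀ᶠ i in l, 0 ≤ ε i) :
    Tendsto (fun i => perturbedGammaIntegral (p i) (ε i) / perturbedGammaIntegral (p i - 1) (ε i))
      l (𝓝 p₀) := by
  have hΓ : Gamma p₀ ≠ 0 := (Gamma_pos_of_pos hp₀).ne'
  have hlow := tendsto_perturbedGammaIntegral (p₀ := p₀ - 1) (by linarith) (hp.sub_const 1) hε
    hε_nonneg
  rw [sub_add_cancel] at hlow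
  have h := (tendsto_perturbedGammaIntegral (by linarith) hp hε hε_nonneg).div hlow hΓ
  rwa [Gamma_add_one hp₀.ne', mul_div_cancel_right₀ _ hΓ] at h

lemma tendsto_sqrt_div_mul_besselR {ν φ : α → ℝ} {ν₀ ω : ℝ} (hν₀ : 0 < ν₀) (hω : 0 < ω)
    (hν : Tendsto ν l (𝓝 ν₀)) (hφ : Tendsto φ l (𝓝 0)) (hφ_pos : ∀ᶠ i in l, 0 < φ i) :
    Tendsto (fun i => sqrt (φ i / ω) * besselR (ν i) (2 * sqrt (ω * φ i))) l (𝓝 (ν₀ / ω)) := by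
  have hε : Tendsto (fun i => ω * φ i) l (𝓝 0) := by simpa using hφ.const_mul ω
  have h := (tendsto_perturbedGammaIntegral_div hν₀ hν hε
    (hφ_pos.mono fun i hi => by positivity)).const_mul ω⁻¹
  rw [inv_mul_eq_div] at h
  refine h.congr' ?_
  filter_upwards [hφ_pos] with i hi
  rw [sqrt_div_mul_besselR_two_mul_sqrt_mul _ hω hi]

end Limits

/-- **Theorem 2d: non-informative experts.**
As `ξ → 0⁺` (i.e. the coefficient of variation `1/√ξ` of the expert opinions tends to ∞),
the posterior mean of the Poisson intensity converges to `(α₀+s)β₀/(VKβ₀+1)`, which is the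
credibility mixture of the prior mean `α₀β₀` and the maximum likelihood estimate `(s/K)/V`. -/
theorem posterior_mean_tendsto_of_noninformative_experts
    (α₀ β₀ V θbar : ℝ) (hα₀ : 0 < α₀) (hβ₀ : 0 < β₀) (hV : 0 < V) (hθbar : 0 < θbar)
    (K M : ℕ) (hK : 1 ≤ K) (hM : 1 ≤ M) (n : Fin K → ℕ)
    (s ω : ℝ) (hs : s = ∑ k, (n k : ℝ)) (hω : ω = V * K + 1 / β₀) :
    Tendsto (fun ξ : ℝ =>
        Real.sqrt (ξ * M * θbar / ω) *
          besselR (α₀ - M * ξ + s) (2 * Real.sqrt (ω * (ξ * M * θbar))))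
      (nhdsWithin 0 (Set.Ioi 0)) (nhds ((α₀ + s) * β₀ / (V * K * β₀ + 1))) ∧
    (α₀ + s) * β₀ / (V * K * β₀ + 1) =
      (1 / (V * K * β₀ + 1)) * (α₀ * β₀) +
        (1 - 1 / (V * K * β₀ + 1)) * ((s / K) / V) := by
  have hs₀ : 0 ≤ s := hs ▸ by positivity
  have hω₀ : 0 < ω := hω ▸ by positivity
  have hlimit : (α₀ + s) * β₀ / (V * K * β₀ + 1) = (α₀ + s) / ω := by
    rw [hω]
    field_simp
  refine ⟨?_, by field_simp; ring⟩
  rw [hlimit]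
  refine tendsto_sqrt_div_mul_besselR (ν := fun ξ => α₀ - M * ξ + s) (φ := fun ξ => ξ * M * θbar)
    (by positivity) hω₀ ?_ ?_ ?_
  · have h : Continuous fun ξ : ℝ => α₀ - M * ξ + s := by fun_prop
    simpa using (h.tendsto 0).mono_left nhdsWithin_le_nhds
  · have h : Continuous fun ξ : ℝ => ξ * M * θbar := by fun_prop
    simpa using (h.tendsto 0).mono_left nhdsWithin_le_nhds
  · filter_upwards [self_mem_nhdsWithin] with ξ (hξ : 0 < ξ)
    positivity
end
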